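/- arXiv:math/0301094 — 2 statements merged into one kernel-verified Lean document; each statement's English description precedes it below -/
import Mathlib

section
/- For all real numbers x and t and all positive integers n_1, …, n_k with n = n_1 + ⋯ + n_k, the product of centered Charlier polynomials satisfies ∏_{j=1}^k C_{n_j}(x,t) = Σ_{π ∈ 𝒫(n_1,…,n_k)} Σ_{l=0}^{|π|−s(π)} binom(|π|−s(π), l) · t^l · C_{|π|−l}(x,t). -/
open Finset MeasureTheory ProbabilityTheory
open scoped Classical

noncomputable section

/-- Index of the interval block (w.r.t. the list of block sizes `ns`)
containing position `i`. -/
def blockIdx (ns : List ℕ) (i : ℕ) : ℕ :=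
  (List.range ns.length).countP (fun j => (ns.take (j + 1)).sum ≤ i)

/-- `P` is a set partition of `Fin n`. -/
def IsPartition {n : ℕ} (P : Finset (Finset (Fin n))) : Prop :=
  (∀ B ∈ P, B.Nonempty) ∧ (∀ i : Fin n, ∃ B ∈ P, i ∈ B) ∧
    ∀ B ∈ P, ∀ C ∈ P, ∀ i : Fin n, i ∈ B → i ∈ C → B = C

/-- `P` is inhomogeneous w.r.t. the interval partition with block sizes `ns`:
no block of `P` contains two distinct elements lying in the same interval block. -/
def Inhom {n : ℕ} (ns : List ℕ) (P : Finset (Finset (Fin n))) : Prop :=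
  ∀ B ∈ P, ∀ i ∈ B, ∀ j ∈ B, i ≠ j → blockIdx ns (i : ℕ) ≠ blockIdx ns (j : ℕ)

/-- `i` and `j` lie in the same block of `P`. -/
def SameBlock {n : ℕ} (P : Finset (Finset (Fin n))) (i j : Fin n) : Prop :=
  ∃ B ∈ P, i ∈ B ∧ j ∈ B

/-- `s(π)`: the number of singleton blocks. -/
def scount {n : ℕ} (P : Finset (Finset (Fin n))) : ℕ :=
  (P.filter fun B => B.card = 1).card

/-- `s₂(π)`: the number of two-element blocks. -/
def s2count {n : ℕ} (P : Finset (Finset (Fin n))) : ℕ :=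
  (P.filter fun B => B.card = 2).card

/-- `P` is a noncrossing partition: there are no `i < j < k < l` with `i,k` in one
block and `j,l` in a different block. -/
def Noncrossing {n : ℕ} (P : Finset (Finset (Fin n))) : Prop :=
  ¬ ∃ i j k l : Fin n, i < j ∧ j < k ∧ k < l ∧
      SameBlock P i k ∧ SameBlock P j l ∧ ¬ SameBlock P i j

/-- A block `B` is inner if some other block contains elements `a`, `b` with
`a < min B` and `max B < b`. -/
def IsInner {n : ℕ} (P : Finset (Finset (Fin n))) (B : Finset (Fin n)) : Prop :=
  ∃ C ∈ P, C ≠ B ∧ ∃ a ∈ C, ∃ b ∈ C, ∀ x ∈ B, a < x ∧ x < b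

/-- `i(π)`: the number of inner blocks. -/
def innerCount {n : ℕ} (P : Finset (Finset (Fin n))) : ℕ :=
  (P.filter fun B => IsInner P B).card

/-- `o(π)`: the number of outer blocks. -/
def outerCount {n : ℕ} (P : Finset (Finset (Fin n))) : ℕ :=
  (P.filter fun B => ¬ IsInner P B).card

/-- `si(π)`: the number of inner singleton blocks. -/
def siCount {n : ℕ} (P : Finset (Finset (Fin n))) : ℕ :=
  (P.filter fun B => B.card = 1 ∧ IsInner P B).card

/-- `rc(π)`: the number of restricted crossings, i.e. of quadruples
`i < j < k < l` with `i ~ k`, `j ~ l`, `k = min {r > i : r ~ i}` and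
`l = min {r > j : r ~ j}`. -/
def rc {n : ℕ} (P : Finset (Finset (Fin n))) : ℕ :=
  ((univ : Finset (Fin n × Fin n × Fin n × Fin n)).filter fun q =>
      q.1 < q.2.1 ∧ q.2.1 < q.2.2.1 ∧ q.2.2.1 < q.2.2.2 ∧
      SameBlock P q.1 q.2.2.1 ∧ SameBlock P q.2.1 q.2.2.2 ∧
      (∀ r : Fin n, q.1 < r → SameBlock P q.1 r → q.2.2.1 ≤ r) ∧
      (∀ r : Fin n, q.2.1 < r → SameBlock P q.2.1 r → q.2.2.2 ≤ r)).card

/-- The depth `d(i)`: the number of blocks containing `a`, `b` with `a < i < b`. -/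
def depth {n : ℕ} (P : Finset (Finset (Fin n))) (i : Fin n) : ℕ :=
  (P.filter fun B => ∃ a ∈ B, ∃ b ∈ B, a < i ∧ i < b).card

/-- `sd(π)`: the sum of the depths of the singleton elements of `P`. -/
def sd {n : ℕ} (P : Finset (Finset (Fin n))) : ℕ :=
  ∑ i ∈ (univ : Finset (Fin n)).filter (fun i => {i} ∈ P), depth P i

/-- The `q`-integer `[m]_q = 1 + q + ⋯ + q^(m-1)`. -/
def qInt (q : ℝ) (m : ℕ) : ℝ := ∑ j ∈ Finset.range m, q ^ j

/-- The `q`-factorial `[m]_q! = [1]_q [2]_q ⋯ [m]_q`. -/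
def qFact (q : ℝ) (m : ℕ) : ℝ := ∏ j ∈ Finset.range m, qInt q (j + 1)

/-- The Hermite polynomials `H_m(x,t)`:
`x H_m = H_{m+1} + m t H_{m-1}`. -/
def hermiteP (x t : ℝ) : ℕ → ℝ
  | 0 => 1
  | 1 => x
  | m + 2 => x * hermiteP x t (m + 1) - ((m : ℝ) + 1) * t * hermiteP x t m

/-- The centered Charlier polynomials `C_m(x,t)`:
`x C_m = C_{m+1} + m C_m + t m C_{m-1}`. -/
def charlierP (x t : ℝ) : ℕ → ℝ
  | 0 => 1
  | 1 => x
  | m + 2 => (x - ((m : ℝ) + 1)) * charlierP x t (m + 1)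
      - t * ((m : ℝ) + 1) * charlierP x t m

/-- The (scaled) Chebyshev polynomials of the second kind `U_m(x,t)`:
`x U_m = U_{m+1} + t U_{m-1}`. -/
def chebyshevU (x t : ℝ) : ℕ → ℝ
  | 0 => 1
  | 1 => x
  | m + 2 => x * chebyshevU x t (m + 1) - t * chebyshevU x t m

/-- The centered free Charlier polynomials `C_{0,m}(x,t)`:
`x C_{0,m} = C_{0,m+1} + C_{0,m} + t C_{0,m-1}` for `m ≥ 1`, `C_{0,1} = x`. -/
def freeCharlier (x t : ℝ) : ℕ → ℝ
  | 0 => 1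
  | 1 => x
  | m + 2 => (x - 1) * freeCharlier x t (m + 1) - t * freeCharlier x t m

/-- The (scaled) continuous q-Hermite polynomials `H_{q,m}(x,t)`:
`x H_{q,m} = H_{q,m+1} + t [m]_q H_{q,m-1}`. -/
def qHermite (q x t : ℝ) : ℕ → ℝ
  | 0 => 1
  | 1 => x
  | m + 2 => x * qHermite q x t (m + 1) - t * qInt q (m + 1) * qHermite q x t m

/-- The (scaled) centered continuous big q-Hermite polynomials `C_{q,m}(x,t)`:
`x C_{q,m} = C_{q,m+1} + [m]_q C_{q,m} + t [m]_q C_{q,m-1}`. -/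
def bigQHermite (q x t : ℝ) : ℕ → ℝ
  | 0 => 1
  | 1 => x
  | m + 2 => (x - qInt q (m + 1)) * bigQHermite q x t (m + 1)
      - t * qInt q (m + 1) * bigQHermite q x t m

/-- The polynomials `P_{q,m,α}(x,t)`:
`x P_{q,m,α} = P_{q,m+1,α} + α [m]_q P_{q,m,α} + t [m]_q P_{q,m-1,α}`. -/
def qPPoly (q α x t : ℝ) : ℕ → ℝ
  | 0 => 1
  | 1 => x
  | m + 2 => (x - α * qInt q (m + 1)) * qPPoly q α x t (m + 1)
      - t * qInt q (m + 1) * qPPoly q α x t m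

lemma sum_take_le (L : List ℕ) (k : ℕ) : (L.take k).sum ≤ L.sum := by
  conv_rhs => rw [← List.take_append_drop k L]
  rw [List.sum_append]; omega

lemma countP_congr' (l : List ℕ) (p q : ℕ → Bool) (h : ∀ a ∈ l, p a = q a) :
    l.countP p = l.countP q := by
  induction l with
  | nil => rfl
  | cons a l ih =>
    rw [List.countP_cons, List.countP_cons, h a (by simp), ih (fun b hb => h b (by simp [hb]))]

lemma blockIdx_append_lt (L : List ℕ) (a i : ℕ) (hi : i < L.sum) :
    blockIdx (L ++ [a]) i = blockIdx L i := by
  unfold blockIdx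
  rw [List.length_append, List.length_singleton, List.range_succ, List.countP_append]
  have h1 : List.countP (fun j => decide ((List.take (j+1) (L ++ [a])).sum ≤ i)) ([L.length]) = 0 := by
    rw [List.countP_singleton]
    simp only [decide_eq_true_eq]
    rw [if_neg _]
    rw [List.take_of_length_le (by simp), List.sum_append]
    simp; omega
  rw [h1, Nat.add_zero]
  apply countP_congr'
  intro j hj
  rw [List.mem_range] at hj
  rw [List.take_append_of_le_length (by omega)]

lemma blockIdx_lt_length (L : List ℕ) (i : ℕ) (hi : i < L.sum) :
    blockIdx L i < L.length := by
  have hlen : 0 < L.length := by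
    rcases L with _ | ⟨b, L'⟩
    · simp at hi
    · simp
  unfold blockIdx
  have hle := List.countP_le_length (l := List.range L.length)
      (p := fun j => decide ((List.take (j+1) L).sum ≤ i))
  rw [List.length_range] at hle
  rcases lt_or_eq_of_le hle with h | h
  · exact h
  exfalso
  have := List.countP_eq_length.mp (by rw [h, List.length_range])
  have h2 := this (L.length - 1) (by rw [List.mem_range]; omega)
  simp only [decide_eq_true_eq] at h2
  rw [List.take_of_length_le (by omega)] at h2
  omega

lemma blockIdx_last (L : List ℕ) (a i : ℕ) (h1 : L.sum ≤ i) (h2 : i < L.sum + a) :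
    blockIdx (L ++ [a]) i = L.length := by
  unfold blockIdx
  rw [List.length_append, List.length_singleton, List.range_succ, List.countP_append]
  have hA : List.countP (fun j => decide ((List.take (j+1) (L ++ [a])).sum ≤ i)) ([L.length]) = 0 := by
    rw [List.countP_singleton]
    simp only [decide_eq_true_eq]
    rw [if_neg _]
    rw [List.take_of_length_le (by simp), List.sum_append]
    simp; omega
  rw [hA, Nat.add_zero]
  have : List.countP (fun j => decide ((List.take (j+1) (L ++ [a])).sum ≤ i)) (List.range L.length)
      = (List.range L.length).length := by
    apply List.countP_eq_length.mpr
    intro j hj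
    rw [List.mem_range] at hj
    simp only [decide_eq_true_eq]
    rw [List.take_append_of_le_length (by omega)]
    exact le_trans (sum_take_le L (j+1)) h1
  rw [this, List.length_range]

section Ins
variable {N n : ℕ} (h : n + 1 = N) (p : Fin N)

/-- Insert map: `Fin n → Fin N` skipping `p`. -/
def insF (i : Fin n) : Fin N := ⟨if (i : ℕ) < (p : ℕ) then (i : ℕ) else (i : ℕ) + 1, by
  have := i.isLt; split <;> omega⟩

lemma insF_inj : Function.Injective (insF h p) := by
  intro a b hab
  have := congrArg Fin.val hab
  simp only [insF] at this
  apply Fin.ext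
  split_ifs at this <;> omega

lemma insF_ne (i : Fin n) : insF h p i ≠ p := by
  intro hc
  have := congrArg Fin.val hc
  simp only [insF] at this
  split_ifs at this <;> omega

lemma exists_insF (j : Fin N) (hj : j ≠ p) : ∃ i : Fin n, insF h p i = j := by
  have hjv : (j : ℕ) ≠ (p : ℕ) := fun hc => hj (Fin.ext hc)
  have hp := p.isLt
  have hjl := j.isLt
  refine ⟨⟨if (j : ℕ) < (p : ℕ) then (j : ℕ) else (j : ℕ) - 1, by split <;> omega⟩, ?_⟩
  apply Fin.ext
  simp only [insF]
  split_ifs <;> simp_all <;> omega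

/-- Image of a block under insertion. -/
def bimg (B : Finset (Fin n)) : Finset (Fin N) := B.image (insF h p)

/-- Preimage of a block under insertion. -/
def bpre (C : Finset (Fin N)) : Finset (Fin n) := univ.filter (fun i => insF h p i ∈ C)

lemma mem_bimg {B : Finset (Fin n)} {j : Fin N} : j ∈ bimg h p B ↔ ∃ i ∈ B, insF h p i = j := by
  simp [bimg]

lemma insF_mem_bimg {B : Finset (Fin n)} {i : Fin n} : insF h p i ∈ bimg h p B ↔ i ∈ B := by
  rw [mem_bimg]
  constructor
  · rintro ⟨i', hi', he⟩; rwa [← insF_inj h p he]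
  · exact fun hi => ⟨i, hi, rfl⟩

lemma mem_bpre {C : Finset (Fin N)} {i : Fin n} : i ∈ bpre h p C ↔ insF h p i ∈ C := by
  simp [bpre]

lemma p_not_mem_bimg (B : Finset (Fin n)) : p ∉ bimg h p B := by
  rw [mem_bimg]; rintro ⟨i, _, he⟩; exact insF_ne h p i he

lemma bpre_bimg (B : Finset (Fin n)) : bpre h p (bimg h p B) = B := by
  ext i; rw [mem_bpre, insF_mem_bimg]

lemma bimg_bpre (C : Finset (Fin N)) : bimg h p (bpre h p C) = C.erase p := by
  ext j
  rw [mem_bimg, Finset.mem_erase]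
  constructor
  · rintro ⟨i, hi, rfl⟩
    rw [mem_bpre] at hi
    exact ⟨insF_ne h p i, hi⟩
  · rintro ⟨hne, hj⟩
    obtain ⟨i, rfl⟩ := exists_insF h p j hne
    exact ⟨i, (mem_bpre h p).mpr hj, rfl⟩

lemma bimg_bpre_of_not_mem {C : Finset (Fin N)} (hC : p ∉ C) : bimg h p (bpre h p C) = C := by
  rw [bimg_bpre, Finset.erase_eq_of_notMem hC]

lemma bimg_card (B : Finset (Fin n)) : (bimg h p B).card = B.card :=
  Finset.card_image_of_injective _ (insF_inj h p)

lemma bimg_injective : Function.Injective (bimg h p) := by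
  intro a b hab
  rw [← bpre_bimg h p a, hab, bpre_bimg]

lemma bimg_nonempty {B : Finset (Fin n)} (hB : B.Nonempty) : (bimg h p B).Nonempty :=
  hB.image _

end Ins

/-- The block of `P` containing `i` (junk if none). -/
def blockOf {n : ℕ} (P : Finset (Finset (Fin n))) (i : Fin n) : Finset (Fin n) :=
  if h : ∃ B ∈ P, i ∈ B then h.choose else ∅

lemma blockOf_spec {n : ℕ} {P : Finset (Finset (Fin n))} {i : Fin n}
    (h : ∃ B ∈ P, i ∈ B) : blockOf P i ∈ P ∧ i ∈ blockOf P i := by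
  rw [blockOf, dif_pos h]
  exact ⟨h.choose_spec.1, h.choose_spec.2⟩

lemma blockOf_eq {n : ℕ} {P : Finset (Finset (Fin n))} (hP : IsPartition P)
    {B : Finset (Fin n)} (hB : B ∈ P) {i : Fin n} (hi : i ∈ B) : blockOf P i = B := by
  have h : ∃ B ∈ P, i ∈ B := ⟨B, hB, hi⟩
  obtain ⟨h1, h2⟩ := blockOf_spec h
  exact hP.2.2 _ h1 _ hB i h2 hi

section InsPart
variable {N n : ℕ} (h : n + 1 = N) (p : Fin N)

/-- Insert `p` as a new singleton block. -/
def sIns (Q : Finset (Finset (Fin n))) : Finset (Finset (Fin N)) :=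
  insert {p} (Q.image (bimg h p))

/-- Insert `p` into (the image of) the block `B`. -/
def jIns (Q : Finset (Finset (Fin n))) (B : Finset (Fin n)) : Finset (Finset (Fin N)) :=
  insert (insert p (bimg h p B)) ((Q.erase B).image (bimg h p))

lemma singleton_not_mem_image_bimg {Q : Finset (Finset (Fin n))} (hQ : ∀ B ∈ Q, B.Nonempty) :
    ({p} : Finset (Fin N)) ∉ Q.image (bimg h p) := by
  rw [Finset.mem_image]
  rintro ⟨B, hB, hBe⟩
  obtain ⟨j, hj⟩ := bimg_nonempty h p (hQ B hB)
  have : j = p := by rw [← Finset.mem_singleton, ← hBe]; exact hj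
  exact p_not_mem_bimg h p B (this ▸ hj)

lemma bigB_not_mem_image_bimg (B : Finset (Fin n)) (S : Finset (Finset (Fin n))) :
    insert p (bimg h p B) ∉ S.image (bimg h p) := by
  rw [Finset.mem_image]
  rintro ⟨C, _, hCe⟩
  exact p_not_mem_bimg h p C (hCe ▸ Finset.mem_insert_self p _)

lemma sIns_card {Q : Finset (Finset (Fin n))} (hQ : ∀ B ∈ Q, B.Nonempty) :
    (sIns h p Q).card = Q.card + 1 := by
  rw [sIns, Finset.card_insert_of_notMem (singleton_not_mem_image_bimg h p hQ),
    Finset.card_image_of_injective _ (bimg_injective h p)]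

lemma jIns_card {Q : Finset (Finset (Fin n))} {B : Finset (Fin n)} (hB : B ∈ Q) :
    (jIns h p Q B).card = Q.card := by
  rw [jIns, Finset.card_insert_of_notMem (bigB_not_mem_image_bimg h p B _),
    Finset.card_image_of_injective _ (bimg_injective h p),
    Finset.card_erase_of_mem hB]
  have := Finset.card_pos.mpr ⟨B, hB⟩
  omega

lemma scount_image_bimg (Q : Finset (Finset (Fin n))) :
    ((Q.image (bimg h p)).filter (fun C => C.card = 1)).card = scount Q := by
  have : (Q.image (bimg h p)).filter (fun C => C.card = 1)
      = (Q.filter (fun B => B.card = 1)).image (bimg h p) := by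
    rw [Finset.filter_image]
    congr 1
    apply Finset.filter_congr
    intro B _
    rw [bimg_card]
  rw [this, Finset.card_image_of_injective _ (bimg_injective h p), scount]

lemma sIns_scount {Q : Finset (Finset (Fin n))} (hQ : ∀ B ∈ Q, B.Nonempty) :
    scount (sIns h p Q) = scount Q + 1 := by
  rw [scount, sIns, Finset.filter_insert, if_pos (Finset.card_singleton p),
    Finset.card_insert_of_notMem, scount_image_bimg]
  · intro hc
    exact singleton_not_mem_image_bimg h p hQ (Finset.mem_of_mem_filter _ hc)

lemma jIns_scount {Q : Finset (Finset (Fin n))} {B : Finset (Fin n)} (hB : B ∈ Q)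
    (hBne : B.Nonempty) :
    scount (jIns h p Q B) = scount Q - (if B.card = 1 then 1 else 0) := by
  have hbig : (insert p (bimg h p B)).card ≠ 1 := by
    rw [Finset.card_insert_of_notMem (p_not_mem_bimg h p B), bimg_card]
    have := Finset.card_pos.mpr hBne
    omega
  rw [scount, jIns, Finset.filter_insert, if_neg hbig, scount_image_bimg,
    scount, Finset.filter_erase, Finset.card_erase_eq_ite]
  split_ifs with h1 h2 h2
  · rfl
  · exact absurd (Finset.mem_filter.mp h1).2 h2
  · exact absurd (Finset.mem_filter.mpr ⟨hB, h2⟩) h1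
  · rfl

lemma sIns_isPartition {Q : Finset (Finset (Fin n))} (hQ : IsPartition Q) :
    IsPartition (sIns h p Q) := by
  obtain ⟨hne, hcov, huniq⟩ := hQ
  refine ⟨?_, ?_, ?_⟩
  · intro C hC
    rcases Finset.mem_insert.mp hC with rfl | hC
    · exact ⟨p, Finset.mem_singleton_self p⟩
    · obtain ⟨B, hB, rfl⟩ := Finset.mem_image.mp hC
      exact bimg_nonempty h p (hne B hB)
  · intro j
    by_cases hj : j = p
    · exact ⟨{p}, Finset.mem_insert_self _ _, by simp [hj]⟩
    · obtain ⟨i, rfl⟩ := exists_insF h p j hj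
      obtain ⟨B, hB, hiB⟩ := hcov i
      exact ⟨bimg h p B, Finset.mem_insert_of_mem (Finset.mem_image_of_mem _ hB),
        (insF_mem_bimg h p).mpr hiB⟩
  · intro C hC C' hC' j hjC hjC'
    rcases Finset.mem_insert.mp hC with rfl | hC
    · rcases Finset.mem_insert.mp hC' with rfl | hC'
      · rfl
      · obtain ⟨B, hB, rfl⟩ := Finset.mem_image.mp hC'
        rw [Finset.mem_singleton] at hjC
        exact absurd (hjC ▸ hjC') (p_not_mem_bimg h p B)
    · obtain ⟨B, hB, rfl⟩ := Finset.mem_image.mp hC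
      rcases Finset.mem_insert.mp hC' with rfl | hC'
      · rw [Finset.mem_singleton] at hjC'
        exact absurd (hjC' ▸ hjC) (p_not_mem_bimg h p B)
      · obtain ⟨B', hB', rfl⟩ := Finset.mem_image.mp hC'
        obtain ⟨i, hiB, rfl⟩ := (mem_bimg h p).mp hjC
        have hiB' : i ∈ B' := (insF_mem_bimg h p).mp hjC'
        rw [huniq B hB B' hB' i hiB hiB']

lemma jIns_isPartition {Q : Finset (Finset (Fin n))} (hQ : IsPartition Q)
    {B : Finset (Fin n)} (hB : B ∈ Q) : IsPartition (jIns h p Q B) := by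
  obtain ⟨hne, hcov, huniq⟩ := hQ
  refine ⟨?_, ?_, ?_⟩
  · intro C hC
    rcases Finset.mem_insert.mp hC with rfl | hC
    · exact ⟨p, Finset.mem_insert_self _ _⟩
    · obtain ⟨C', hC', rfl⟩ := Finset.mem_image.mp hC
      exact bimg_nonempty h p (hne C' (Finset.mem_of_mem_erase hC'))
  · intro j
    by_cases hj : j = p
    · exact ⟨insert p (bimg h p B), Finset.mem_insert_self _ _, by simp [hj]⟩
    · obtain ⟨i, rfl⟩ := exists_insF h p j hj
      obtain ⟨C, hC, hiC⟩ := hcov i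
      by_cases hCB : C = B
      · subst hCB
        exact ⟨insert p (bimg h p C), Finset.mem_insert_self _ _,
          Finset.mem_insert_of_mem ((insF_mem_bimg h p).mpr hiC)⟩
      · exact ⟨bimg h p C, Finset.mem_insert_of_mem
          (Finset.mem_image_of_mem _ (Finset.mem_erase.mpr ⟨hCB, hC⟩)),
          (insF_mem_bimg h p).mpr hiC⟩
  · intro C hC C' hC' j hjC hjC'
    rcases Finset.mem_insert.mp hC with rfl | hC
    · rcases Finset.mem_insert.mp hC' with rfl | hC'
      · rfl
      · obtain ⟨D, hD, rfl⟩ := Finset.mem_image.mp hC'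
        exfalso
        obtain ⟨i, hiD, rfl⟩ := (mem_bimg h p).mp hjC'
        rcases Finset.mem_insert.mp hjC with hc | hc
        · exact insF_ne h p i hc
        · have hiB : i ∈ B := (insF_mem_bimg h p).mp hc
          have := huniq _ (Finset.mem_of_mem_erase hD) _ hB i hiD hiB
          exact (Finset.mem_erase.mp hD).1 this
    · obtain ⟨D, hD, rfl⟩ := Finset.mem_image.mp hC
      rcases Finset.mem_insert.mp hC' with rfl | hC'
      · exfalso
        obtain ⟨i, hiD, rfl⟩ := (mem_bimg h p).mp hjC
        rcases Finset.mem_insert.mp hjC' with hc | hc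
        · exact insF_ne h p i hc
        · have hiB : i ∈ B := (insF_mem_bimg h p).mp hc
          have := huniq _ (Finset.mem_of_mem_erase hD) _ hB i hiD hiB
          exact (Finset.mem_erase.mp hD).1 this
      · obtain ⟨D', hD', rfl⟩ := Finset.mem_image.mp hC'
        obtain ⟨i, hiD, rfl⟩ := (mem_bimg h p).mp hjC
        have hiD' : i ∈ D' := (insF_mem_bimg h p).mp hjC'
        rw [huniq D (Finset.mem_of_mem_erase hD) D' (Finset.mem_of_mem_erase hD') i hiD hiD']

lemma singleton_mem_sIns (Q : Finset (Finset (Fin n))) : ({p} : Finset (Fin N)) ∈ sIns h p Q :=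
  Finset.mem_insert_self _ _

lemma singleton_not_mem_jIns {Q : Finset (Finset (Fin n))} {B : Finset (Fin n)}
    (hBne : B.Nonempty) : ({p} : Finset (Fin N)) ∉ jIns h p Q B := by
  rw [jIns, Finset.mem_insert]
  rintro (hc | hc)
  · obtain ⟨i0, hi0⟩ := hBne
    have h2 : insF h p i0 ∈ ({p} : Finset (Fin N)) := by
      rw [hc]
      exact Finset.mem_insert_of_mem ((insF_mem_bimg h p).mpr hi0)
    exact insF_ne h p i0 (Finset.mem_singleton.mp h2)
  · obtain ⟨C, _, hCe⟩ := Finset.mem_image.mp hc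
    have : p ∈ bimg h p C := by rw [hCe]; exact Finset.mem_singleton_self p
    exact p_not_mem_bimg h p C this

variable {ns' ns : List ℕ}

lemma sIns_inhom (hcompat : ∀ i : Fin n, blockIdx ns' ((insF h p i : Fin N) : ℕ) = blockIdx ns (i : ℕ))
    {Q : Finset (Finset (Fin n))} (hQ : Inhom ns Q) : Inhom ns' (sIns h p Q) := by
  intro C hC i hi j hj hij
  rcases Finset.mem_insert.mp hC with rfl | hC
  · rw [Finset.mem_singleton] at hi hj
    exact absurd (hi.trans hj.symm) hij
  · obtain ⟨B, hB, rfl⟩ := Finset.mem_image.mp hC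
    obtain ⟨a, ha, rfl⟩ := (mem_bimg h p).mp hi
    obtain ⟨b, hb, rfl⟩ := (mem_bimg h p).mp hj
    rw [hcompat a, hcompat b]
    exact hQ B hB a ha b hb (fun hc => hij (by rw [hc]))

lemma jIns_inhom (hcompat : ∀ i : Fin n, blockIdx ns' ((insF h p i : Fin N) : ℕ) = blockIdx ns (i : ℕ))
    {Q : Finset (Finset (Fin n))} (hQ : Inhom ns Q) {B : Finset (Fin n)} (hB : B ∈ Q)
    (hBcond : ∀ i ∈ B, blockIdx ns (i : ℕ) ≠ blockIdx ns' ((p : Fin N) : ℕ)) :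
    Inhom ns' (jIns h p Q B) := by
  have key : ∀ a ∈ B, blockIdx ns' (((p : Fin N)) : ℕ) ≠ blockIdx ns' ((insF h p a : Fin N) : ℕ) := by
    intro a ha
    rw [hcompat a]
    exact fun hc => hBcond a ha hc.symm
  intro C hC i hi j hj hij
  rcases Finset.mem_insert.mp hC with rfl | hC
  · -- C = insert p (bimg B)
    rcases Finset.mem_insert.mp hi with hip | hi
    · rcases Finset.mem_insert.mp hj with hjp | hj
      · exact absurd (hip.trans hjp.symm) hij
      · obtain ⟨b, hb, rfl⟩ := (mem_bimg h p).mp hj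
        rw [hip]
        exact key b hb
    · obtain ⟨a, ha, rfl⟩ := (mem_bimg h p).mp hi
      rcases Finset.mem_insert.mp hj with hjp | hj
      · rw [hjp]
        exact (key a ha).symm
      · obtain ⟨b, hb, rfl⟩ := (mem_bimg h p).mp hj
        rw [hcompat a, hcompat b]
        exact hQ B hB a ha b hb (fun hc => hij (by rw [hc]))
  · obtain ⟨D, hD, rfl⟩ := Finset.mem_image.mp hC
    obtain ⟨a, ha, rfl⟩ := (mem_bimg h p).mp hi
    obtain ⟨b, hb, rfl⟩ := (mem_bimg h p).mp hj
    rw [hcompat a, hcompat b]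
    exact hQ D (Finset.mem_of_mem_erase hD) a ha b hb (fun hc => hij (by rw [hc]))

lemma bpre_nonempty_of_ne_singleton {C : Finset (Fin N)} (hCne : C.Nonempty)
    (hC : C ≠ ({p} : Finset (Fin N))) : (bpre h p C).Nonempty := by
  by_cases hsub : C ⊆ {p}
  · rcases Finset.subset_singleton_iff.mp hsub with rfl | rfl
    · exact absurd rfl (Finset.nonempty_iff_ne_empty.mp hCne)
    · exact absurd rfl hC
  · obtain ⟨j, hjC, hjp⟩ := Finset.not_subset.mp hsub
    rw [Finset.mem_singleton] at hjp
    obtain ⟨i, rfl⟩ := exists_insF h p j hjp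
    exact ⟨i, (mem_bpre h p).mpr hjC⟩

lemma bpre_injOn {P : Finset (Finset (Fin N))} (hP : IsPartition P)
    {C C' : Finset (Fin N)} (hC : C ∈ P) (hC' : C' ∈ P)
    (hne : (bpre h p C).Nonempty) (he : bpre h p C = bpre h p C') : C = C' := by
  obtain ⟨i, hi⟩ := hne
  have hi' : i ∈ bpre h p C' := he ▸ hi
  rw [mem_bpre] at hi hi'
  exact hP.2.2 C hC C' hC' _ hi hi'

lemma drop_isPartition {P : Finset (Finset (Fin N))} (hP : IsPartition P) :
    IsPartition ((P.erase ({p} : Finset (Fin N))).image (bpre h p)) := by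
  obtain ⟨hne, hcov, huniq⟩ := hP
  refine ⟨?_, ?_, ?_⟩
  · intro X hX
    obtain ⟨C, hC, rfl⟩ := Finset.mem_image.mp hX
    obtain ⟨hC1, hC2⟩ := Finset.mem_erase.mp hC
    exact bpre_nonempty_of_ne_singleton h p (hne C hC2) hC1
  · intro i
    obtain ⟨C, hC, hiC⟩ := hcov (insF h p i)
    have hCne : C ≠ {p} := by
      rintro rfl
      exact insF_ne h p i (Finset.mem_singleton.mp hiC)
    exact ⟨bpre h p C, Finset.mem_image_of_mem _ (Finset.mem_erase.mpr ⟨hCne, hC⟩),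
      (mem_bpre h p).mpr hiC⟩
  · intro X hX Y hY i hiX hiY
    obtain ⟨C, hC, rfl⟩ := Finset.mem_image.mp hX
    obtain ⟨C', hC', rfl⟩ := Finset.mem_image.mp hY
    rw [mem_bpre] at hiX hiY
    rw [huniq C (Finset.mem_of_mem_erase hC) C' (Finset.mem_of_mem_erase hC') _ hiX hiY]

lemma drop_inhom (hcompat : ∀ i : Fin n, blockIdx ns' ((insF h p i : Fin N) : ℕ) = blockIdx ns (i : ℕ))
    {P : Finset (Finset (Fin N))} (hI : Inhom ns' P) (S : Finset (Finset (Fin N))) (hS : S ⊆ P) :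
    Inhom ns (S.image (bpre h p)) := by
  intro X hX i hi j hj hij
  obtain ⟨C, hC, rfl⟩ := Finset.mem_image.mp hX
  rw [mem_bpre] at hi hj
  rw [← hcompat i, ← hcompat j]
  exact hI C (hS hC) _ hi _ hj (fun hc => hij (insF_inj h p hc))

lemma sIns_drop {P : Finset (Finset (Fin N))} (hP : IsPartition P) (hp : ({p} : Finset (Fin N)) ∈ P) :
    sIns h p ((P.erase ({p} : Finset (Fin N))).image (bpre h p)) = P := by
  rw [sIns, Finset.image_image]
  have himg : (P.erase ({p} : Finset (Fin N))).image (bimg h p ∘ bpre h p) = P.erase {p} := by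
    rw [show (P.erase ({p} : Finset (Fin N))).image (bimg h p ∘ bpre h p)
        = (P.erase ({p} : Finset (Fin N))).image id from Finset.image_congr ?_,
      Finset.image_id]
    intro C hC
    rw [Finset.mem_coe, Finset.mem_erase] at hC
    have hpC : p ∉ C := by
      intro hpC
      exact hC.1 (hP.2.2 C hC.2 {p} hp p hpC (Finset.mem_singleton_self p))
    exact bimg_bpre_of_not_mem h p hpC
  rw [himg, Finset.insert_erase hp]

lemma drop_sIns {Q : Finset (Finset (Fin n))} (hQ : IsPartition Q) :
    ((sIns h p Q).erase ({p} : Finset (Fin N))).image (bpre h p) = Q := by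
  rw [sIns, Finset.erase_insert (singleton_not_mem_image_bimg h p hQ.1), Finset.image_image]
  rw [show Q.image (bpre h p ∘ bimg h p) = Q.image id from Finset.image_congr ?_, Finset.image_id]
  intro B _
  exact bpre_bimg h p B

lemma bpre_insert_p (B : Finset (Fin n)) :
    bpre h p (insert p (bimg h p B)) = B := by
  ext i
  rw [mem_bpre, Finset.mem_insert]
  constructor
  · rintro (hc | hc)
    · exact absurd hc (insF_ne h p i)
    · exact (insF_mem_bimg h p).mp hc
  · exact fun hi => Or.inr ((insF_mem_bimg h p).mpr hi)

lemma phi_jIns_fst {Q : Finset (Finset (Fin n))} (hB : B ∈ Q) :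
    (jIns h p Q B).image (bpre h p) = Q := by
  rw [jIns, Finset.image_insert, bpre_insert_p, Finset.image_image]
  rw [show (Q.erase B).image (bpre h p ∘ bimg h p) = (Q.erase B).image id from
    Finset.image_congr ?_, Finset.image_id, Finset.insert_erase hB]
  intro C _
  exact bpre_bimg h p C

lemma phi_jIns_snd {Q : Finset (Finset (Fin n))} (hQ : IsPartition Q) (hB : B ∈ Q) :
    bpre h p (blockOf (jIns h p Q B) p) = B := by
  rw [blockOf_eq (jIns_isPartition h p hQ hB) (Finset.mem_insert_self _ _)
    (Finset.mem_insert_self p _), bpre_insert_p]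

lemma jIns_phi {P : Finset (Finset (Fin N))} (hP : IsPartition P)
    (hp : ({p} : Finset (Fin N)) ∉ P) :
    jIns h p (P.image (bpre h p)) (bpre h p (blockOf P p)) = P := by
  obtain ⟨hBpP, hpBp⟩ := blockOf_spec (hP.2.1 p)
  set Bp := blockOf P p with hBpdef
  have hBpne : Bp ≠ {p} := fun hc => hp (hc ▸ hBpP)
  have hpre_ne : (bpre h p Bp).Nonempty :=
    bpre_nonempty_of_ne_singleton h p (hP.1 Bp hBpP) hBpne
  have h1 : insert p (bimg h p (bpre h p Bp)) = Bp := by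
    rw [bimg_bpre, Finset.insert_erase hpBp]
  have h2 : (P.image (bpre h p)).erase (bpre h p Bp) = (P.erase Bp).image (bpre h p) := by
    ext X
    rw [Finset.mem_erase, Finset.mem_image, Finset.mem_image]
    constructor
    · rintro ⟨hXne, C, hC, rfl⟩
      refine ⟨C, Finset.mem_erase.mpr ⟨?_, hC⟩, rfl⟩
      rintro rfl
      exact hXne rfl
    · rintro ⟨C, hC, rfl⟩
      obtain ⟨hCne, hC⟩ := Finset.mem_erase.mp hC
      refine ⟨?_, C, hC, rfl⟩
      intro hc
      exact hCne (bpre_injOn h p hP hC hBpP (hc ▸ hpre_ne) hc)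
  have h3 : ((P.erase Bp).image (bpre h p)).image (bimg h p) = P.erase Bp := by
    rw [Finset.image_image]
    rw [show (P.erase Bp).image (bimg h p ∘ bpre h p) = (P.erase Bp).image id from
      Finset.image_congr ?_, Finset.image_id]
    intro C hC
    rw [Finset.mem_coe, Finset.mem_erase] at hC
    have hpC : p ∉ C := fun hpC => hC.1 (hP.2.2 C hC.2 Bp hBpP p hpC hpBp)
    exact bimg_bpre_of_not_mem h p hpC
  rw [jIns, h1, h2, h3, Finset.insert_erase hBpP]

end InsPart

theorem master {N n : ℕ} (h : n + 1 = N) (p : Fin N) (ns' ns : List ℕ)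
    (hcompat : ∀ i : Fin n, blockIdx ns' ((insF h p i : Fin N) : ℕ) = blockIdx ns (i : ℕ))
    (F : Finset (Finset (Fin N)) → ℝ) :
    ∑ P ∈ univ.filter (fun P : Finset (Finset (Fin N)) => IsPartition P ∧ Inhom ns' P), F P
    = ∑ Q ∈ univ.filter (fun Q : Finset (Finset (Fin n)) => IsPartition Q ∧ Inhom ns Q),
        (F (sIns h p Q) +
          ∑ B ∈ Q.filter (fun B : Finset (Fin n) =>
              ∀ i ∈ B, blockIdx ns (i : ℕ) ≠ blockIdx ns' ((p : Fin N) : ℕ)),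
            F (jIns h p Q B)) := by
  rw [← Finset.sum_filter_add_sum_filter_not
    (univ.filter (fun P : Finset (Finset (Fin N)) => IsPartition P ∧ Inhom ns' P))
    (fun P => ({p} : Finset (Fin N)) ∈ P) F, Finset.sum_add_distrib]
  congr 1
  · -- singleton part
    apply Finset.sum_nbij' (i := fun P => (P.erase ({p} : Finset (Fin N))).image (bpre h p))
      (j := fun Q => sIns h p Q)
    · intro P hP
      rw [Finset.mem_filter] at hP ⊢
      obtain ⟨hP1, hPp⟩ := hP
      rw [Finset.mem_filter] at hP1
      obtain ⟨-, hpart, hinh⟩ := hP1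
      exact ⟨Finset.mem_univ _, drop_isPartition h p hpart,
        drop_inhom h p hcompat hinh _ (Finset.erase_subset _ _)⟩
    · intro Q hQ
      rw [Finset.mem_filter] at hQ
      obtain ⟨-, hpart, hinh⟩ := hQ
      rw [Finset.mem_filter, Finset.mem_filter]
      exact ⟨⟨Finset.mem_univ _, sIns_isPartition h p hpart, sIns_inhom h p hcompat hinh⟩,
        singleton_mem_sIns h p Q⟩
    · intro P hP
      rw [Finset.mem_filter, Finset.mem_filter] at hP
      exact sIns_drop h p hP.1.2.1 hP.2
    · intro Q hQ
      rw [Finset.mem_filter] at hQ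
      exact drop_sIns h p hQ.2.1
    · intro P hP
      rw [Finset.mem_filter, Finset.mem_filter] at hP
      rw [sIns_drop h p hP.1.2.1 hP.2]
  · -- join part
    rw [Finset.sum_sigma']
    apply Finset.sum_nbij'
      (i := fun P => (⟨P.image (bpre h p), bpre h p (blockOf P p)⟩ :
        Σ _ : Finset (Finset (Fin n)), Finset (Fin n)))
      (j := fun x => jIns h p x.1 x.2)
    · intro P hP
      rw [Finset.mem_filter] at hP
      obtain ⟨hP1, hPp⟩ := hP
      rw [Finset.mem_filter] at hP1
      obtain ⟨-, hpart, hinh⟩ := hP1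
      obtain ⟨hBpP, hpBp⟩ := blockOf_spec (hpart.2.1 p)
      have herase : P.erase ({p} : Finset (Fin N)) = P := Finset.erase_eq_of_notMem hPp
      rw [Finset.mem_sigma, Finset.mem_filter]
      refine ⟨⟨Finset.mem_univ _, by rw [← herase]; exact drop_isPartition h p hpart,
        drop_inhom h p hcompat hinh _ (le_refl _)⟩, ?_⟩
      rw [Finset.mem_filter]
      refine ⟨Finset.mem_image_of_mem _ hBpP, ?_⟩
      intro i hi
      rw [mem_bpre] at hi
      rw [← hcompat i]
      exact hinh _ hBpP _ hi _ hpBp (insF_ne h p i)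
    · rintro ⟨Q, B⟩ hQB
      rw [Finset.mem_sigma, Finset.mem_filter] at hQB
      obtain ⟨⟨-, hpart, hinh⟩, hB⟩ := hQB
      rw [Finset.mem_filter] at hB
      obtain ⟨hBQ, hBcond⟩ := hB
      rw [Finset.mem_filter, Finset.mem_filter]
      exact ⟨⟨Finset.mem_univ _, jIns_isPartition h p hpart hBQ,
        jIns_inhom h p hcompat hinh hBQ hBcond⟩,
        singleton_not_mem_jIns h p (hpart.1 B hBQ)⟩
    · intro P hP
      rw [Finset.mem_filter, Finset.mem_filter] at hP
      exact jIns_phi h p hP.1.2.1 hP.2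
    · rintro ⟨Q, B⟩ hQB
      rw [Finset.mem_sigma, Finset.mem_filter] at hQB
      obtain ⟨⟨-, hpart, hinh⟩, hB⟩ := hQB
      have hBQ := Finset.mem_of_mem_filter _ hB
      exact Sigma.ext (phi_jIns_fst h p hBQ) (heq_of_eq (phi_jIns_snd h p hpart hBQ))
    · intro P hP
      rw [Finset.mem_filter, Finset.mem_filter] at hP
      rw [jIns_phi h p hP.1.2.1 hP.2]

/-- Weight polynomial. -/
def W (x t : ℝ) (b c : ℕ) : ℝ :=
  ∑ l ∈ Finset.range (c+1), (c.choose l : ℝ) * t^l * charlierP x t (b - l)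

lemma charlier_rec (x t : ℝ) (m : ℕ) :
    x * charlierP x t m
      = charlierP x t (m+1) + (m : ℝ) * charlierP x t m + t * m * charlierP x t (m-1) := by
  match m with
  | 0 => simp [charlierP]
  | (k+1) =>
    have : charlierP x t (k+2) = (x - ((k : ℝ) + 1)) * charlierP x t (k + 1)
        - t * ((k : ℝ) + 1) * charlierP x t k := rfl
    rw [show k+1+1 = k+2 from rfl, this]
    push_cast
    ring

lemma W_succ (x t : ℝ) (b c : ℕ) : W x t b (c+1) = W x t b c + t * W x t (b-1) c := by
  have hW : W x t b c
      = ∑ l ∈ Finset.range (c+1+1), (c.choose l : ℝ) * t^l * charlierP x t (b-l) := by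
    rw [Finset.sum_range_succ, Nat.choose_succ_self]
    simp [W]
  rw [W, hW,
    Finset.sum_range_succ' (fun l => ((c+1).choose l : ℝ) * t^l * charlierP x t (b-l)) (c+1),
    Finset.sum_range_succ' (fun l => (c.choose l : ℝ) * t^l * charlierP x t (b-l)) (c+1)]
  have key : (∑ i ∈ Finset.range (c+1), ((c+1).choose (i+1) : ℝ) * t^(i+1) * charlierP x t (b-(i+1)))
      = (∑ i ∈ Finset.range (c+1), (c.choose (i+1) : ℝ) * t^(i+1) * charlierP x t (b-(i+1)))
      + (∑ i ∈ Finset.range (c+1), t * ((c.choose i : ℝ) * t^i * charlierP x t (b-1-i))) := by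
    rw [← Finset.sum_add_distrib]
    apply Finset.sum_congr rfl
    intro i _
    rw [Nat.choose_succ_succ]
    rw [show b - (i+1) = b - 1 - i from by omega]
    push_cast
    ring
  rw [key]
  rw [show W x t (b-1) c = ∑ l ∈ Finset.range (c+1), (c.choose l : ℝ) * t^l * charlierP x t (b-1-l) from rfl,
    Finset.mul_sum]
  simp only [Nat.choose_zero_right]
  ring

lemma x_mul_W (x t : ℝ) (b c : ℕ) (hcb : c ≤ b) :
    x * W x t b c = W x t (b+1) c + (c : ℝ) * W x t b c + ((b : ℝ) - c) * W x t b (c+1) := by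
  have hsplit : x * W x t b c
      = (∑ l ∈ Finset.range (c+1), (c.choose l : ℝ) * t^l * charlierP x t ((b+1)-l))
      + (∑ l ∈ Finset.range (c+1), ((b : ℝ) - l) * ((c.choose l : ℝ) * t^l * charlierP x t (b-l)))
      + (∑ l ∈ Finset.range (c+1), ((b : ℝ) - l) * ((c.choose l : ℝ) * t^(l+1) * charlierP x t (b-1-l))) := by
    rw [W, Finset.mul_sum]
    rw [← Finset.sum_add_distrib, ← Finset.sum_add_distrib]
    apply Finset.sum_congr rfl
    intro l hl
    rw [Finset.mem_range] at hl
    have hlb : l ≤ b := by omega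
    have h1 : x * ((c.choose l : ℝ) * t^l * charlierP x t (b - l))
        = (c.choose l : ℝ) * t^l * (x * charlierP x t (b - l)) := by ring
    rw [h1, charlier_rec x t (b - l)]
    rw [show b - l + 1 = (b+1) - l from by omega, show b - l - 1 = b - 1 - l from by omega]
    rw [Nat.cast_sub hlb]
    ring
  have hT : (∑ l ∈ Finset.range (c+1), ((c : ℝ) - l) * ((c.choose l : ℝ) * t^(l+1) * charlierP x t (b-1-l)))
      = (∑ l ∈ Finset.range (c+1), (l : ℝ) * ((c.choose l : ℝ) * t^l * charlierP x t (b-l))) := by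
    rw [Finset.sum_range_succ, Finset.sum_range_succ'
      (fun l => (l : ℝ) * ((c.choose l : ℝ) * t^l * charlierP x t (b-l))) c]
    simp only [Nat.cast_zero, zero_mul, add_zero, sub_self]
    apply Finset.sum_congr rfl
    intro i hi
    rw [Finset.mem_range] at hi
    have hcs : ((c.choose (i+1) : ℕ) : ℝ) * ((i+1 : ℕ) : ℝ) = ((c.choose i : ℕ) : ℝ) * ((c - i : ℕ) : ℝ) := by
      rw [← Nat.cast_mul, ← Nat.cast_mul, Nat.choose_succ_right_eq]
    rw [show b - (i+1) = b - 1 - i from by omega]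
    have hic : i ≤ c := by omega
    rw [Nat.cast_sub hic] at hcs
    push_cast at hcs ⊢
    linear_combination (-(t^(i+1) * charlierP x t (b-1-i))) * hcs
  rw [hsplit]
  have e2 : (∑ l ∈ Finset.range (c+1), ((b:ℝ) - l) * ((c.choose l : ℝ) * t^l * charlierP x t (b-l)))
      = (b:ℝ) * W x t b c
        - ∑ l ∈ Finset.range (c+1), (l:ℝ) * ((c.choose l:ℝ) * t^l * charlierP x t (b-l)) := by
    rw [W, Finset.mul_sum, ← Finset.sum_sub_distrib]
    exact Finset.sum_congr rfl fun l _ => by ring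
  have e3 : (∑ l ∈ Finset.range (c+1), ((b:ℝ) - l) * ((c.choose l : ℝ) * t^(l+1) * charlierP x t (b-1-l)))
      = ((b:ℝ) - c) * (t * W x t (b-1) c)
        + ∑ l ∈ Finset.range (c+1), ((c:ℝ) - l) * ((c.choose l:ℝ) * t^(l+1) * charlierP x t (b-1-l)) := by
    rw [show W x t (b-1) c = ∑ l ∈ Finset.range (c+1), (c.choose l : ℝ) * t^l * charlierP x t (b-1-l) from rfl,
      Finset.mul_sum, Finset.mul_sum, ← Finset.sum_add_distrib]
    exact Finset.sum_congr rfl fun l _ => by ring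
  rw [e2, e3, hT, W_succ]
  rw [show W x t (b+1) c = ∑ l ∈ Finset.range (c+1), (c.choose l : ℝ) * t^l * charlierP x t ((b+1)-l) from rfl]
  ring

/-- Sum form appearing on both sides. -/
def Gp (x t : ℝ) (n : ℕ) (ns : List ℕ) : ℝ :=
  ∑ P ∈ univ.filter (fun P : Finset (Finset (Fin n)) => IsPartition P ∧ Inhom ns P),
    W x t P.card (P.card - scount P)

lemma scount_le_card {n : ℕ} (P : Finset (Finset (Fin n))) : scount P ≤ P.card :=
  Finset.card_filter_le _ _

lemma jIns_W {N n : ℕ} (x t : ℝ) (h : n + 1 = N) (p : Fin N) {Q : Finset (Finset (Fin n))}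
    (hQ : IsPartition Q) {B : Finset (Fin n)} (hB : B ∈ Q) :
    W x t (jIns h p Q B).card ((jIns h p Q B).card - scount (jIns h p Q B))
      = if B.card = 1 then W x t Q.card (Q.card - scount Q + 1)
        else W x t Q.card (Q.card - scount Q) := by
  have hsq : scount Q ≤ Q.card := scount_le_card Q
  rw [jIns_card h p hB, jIns_scount h p hB (hQ.1 B hB)]
  by_cases hB1 : B.card = 1
  · rw [if_pos hB1, if_pos hB1]
    have h1 : 1 ≤ scount Q := Finset.card_pos.mpr ⟨B, Finset.mem_filter.mpr ⟨hB, hB1⟩⟩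
    congr 1
    omega
  · rw [if_neg hB1, if_neg hB1, Nat.sub_zero]

lemma perQ {N n : ℕ} (x t : ℝ) (h : n + 1 = N) (p : Fin N) {Q : Finset (Finset (Fin n))}
    (hQ : IsPartition Q) :
    W x t (sIns h p Q).card ((sIns h p Q).card - scount (sIns h p Q))
      + ∑ B ∈ Q, W x t (jIns h p Q B).card ((jIns h p Q B).card - scount (jIns h p Q B))
    = x * W x t Q.card (Q.card - scount Q) := by
  have hsq : scount Q ≤ Q.card := scount_le_card Q
  rw [sIns_card h p hQ.1, sIns_scount h p hQ.1,
    show Q.card + 1 - (scount Q + 1) = Q.card - scount Q from by omega]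
  rw [Finset.sum_congr rfl (fun B hB => jIns_W x t h p hQ hB), Finset.sum_ite,
    Finset.sum_const, Finset.sum_const]
  have hc1 : (Q.filter (fun B => B.card = 1)).card = scount Q := rfl
  have hc2 : (Q.filter (fun B => ¬ B.card = 1)).card = Q.card - scount Q := by
    have := Finset.card_filter_add_card_filter_not
      (s := Q) (p := fun B => B.card = 1)
    omega
  rw [hc1, hc2, x_mul_W x t Q.card (Q.card - scount Q) (by omega)]
  rw [nsmul_eq_mul, nsmul_eq_mul, Nat.cast_sub hsq]
  ring

lemma insF_val_lt {N n : ℕ} (h : n + 1 = N) (p : Fin N) (i : Fin n) (hip : (i : ℕ) < (p : ℕ)) :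
    ((insF h p i : Fin N) : ℕ) = (i : ℕ) := by
  simp [insF, hip]

lemma insF_val_ge {N n : ℕ} (h : n + 1 = N) (p : Fin N) (i : Fin n) (hip : (p : ℕ) ≤ (i : ℕ)) :
    ((insF h p i : Fin N) : ℕ) = (i : ℕ) + 1 := by
  simp [insF]
  omega

lemma stepA (x t : ℝ) (L : List ℕ) (n : ℕ) (hn : L.sum = n) :
    Gp x t (n + 1) (L ++ [1]) = x * Gp x t n L := by
  have h : n + 1 = n + 1 := rfl
  have hplt : n < n + 1 := lt_add_one n
  set p : Fin (n + 1) := ⟨n, hplt⟩ with hp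
  have hcompat : ∀ i : Fin n,
      blockIdx (L ++ [1]) ((insF h p i : Fin (n+1)) : ℕ) = blockIdx L (i : ℕ) := by
    intro i
    rw [insF_val_lt h p i (by exact i.isLt)]
    exact blockIdx_append_lt L 1 i (by omega)
  rw [Gp, master h p (L ++ [1]) L hcompat (fun P => W x t P.card (P.card - scount P)),
    Gp, Finset.mul_sum]
  apply Finset.sum_congr rfl
  intro Q hQ
  rw [Finset.mem_filter] at hQ
  have hfill : Q.filter (fun B : Finset (Fin n) =>
      ∀ i ∈ B, blockIdx L (i : ℕ) ≠ blockIdx (L ++ [1]) ((p : Fin (n+1)) : ℕ)) = Q := by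
    apply Finset.filter_true_of_mem
    intro B _ i _
    have h1 : blockIdx (L ++ [1]) ((p : Fin (n+1)) : ℕ) = L.length := by
      exact blockIdx_last L 1 _ (by simp [hp]; omega) (by simp [hp]; omega)
    rw [h1]
    exact Nat.ne_of_lt (blockIdx_lt_length L i (by omega))
  rw [hfill]
  exact perQ x t h p hQ.2.1

lemma card_I (s m : ℕ) : (univ.filter (fun i : Fin (s + m) => s ≤ (i : ℕ))).card = m := by
  have hmap : (univ.filter (fun i : Fin (s + m) => s ≤ (i : ℕ)))
      = Finset.map ⟨fun j : Fin m => (⟨s + (j : ℕ), by omega⟩ : Fin (s + m)), by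
          intro a b hab
          have := congrArg Fin.val hab
          simp at this
          exact Fin.ext this⟩ univ := by
    ext i
    simp only [Finset.mem_filter, Finset.mem_map, Finset.mem_univ, true_and,
      Function.Embedding.coeFn_mk]
    constructor
    · intro hi
      have hilt := i.isLt
      exact ⟨⟨(i : ℕ) - s, by omega⟩, by apply Fin.ext; show s + ((i : ℕ) - s) = (i : ℕ); omega⟩
    · rintro ⟨j, rfl⟩
      show s ≤ s + (j : ℕ); omega
  rw [hmap, Finset.card_map, Finset.card_univ, Fintype.card_fin]

lemma blockOf_card_one_iff {n : ℕ} {Q : Finset (Finset (Fin n))} (hQ : IsPartition Q)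
    (i : Fin n) : (blockOf Q i).card = 1 ↔ ({i} : Finset (Fin n)) ∈ Q := by
  obtain ⟨hBQ, hiB⟩ := blockOf_spec (hQ.2.1 i)
  constructor
  · intro hc
    obtain ⟨a, ha⟩ := Finset.card_eq_one.mp hc
    rw [ha] at hiB
    rw [Finset.mem_singleton] at hiB
    rw [← hiB] at ha
    rw [← ha]
    exact hBQ
  · intro hmem
    rw [blockOf_eq hQ hmem (Finset.mem_singleton_self i)]
    exact Finset.card_singleton i

lemma stepB (x t : ℝ) (ms : List ℕ) (m : ℕ) (hm : 1 ≤ m) (sm : List ℕ)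
    (hbi : ∀ i : ℕ, i < ms.sum + m - 1 → blockIdx sm i = blockIdx (ms ++ [m]) i) :
    Gp x t (ms.sum + m + 1) (ms ++ [m+1])
      = x * Gp x t (ms.sum + m) (ms ++ [m]) - (m : ℝ) * Gp x t (ms.sum + m) (ms ++ [m])
        - t * m * Gp x t (ms.sum + m - 1) sm := by
  set s := ms.sum with hs
  have h1 : (s + m) + 1 = s + m + 1 := rfl
  set p1 : Fin (s + m + 1) := ⟨s + m, lt_add_one _⟩ with hp1
  have hKp1 : blockIdx (ms ++ [m+1]) ((p1 : Fin (s+m+1)) : ℕ) = ms.length :=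
    blockIdx_last ms (m+1) (s+m) (by omega) (by omega)
  have hbig : ∀ i : ℕ, i < s + m → blockIdx (ms ++ [m+1]) i = blockIdx (ms ++ [m]) i := by
    intro i hi
    by_cases hlt : i < s
    · rw [blockIdx_append_lt ms (m+1) i hlt, blockIdx_append_lt ms m i hlt]
    · rw [blockIdx_last ms (m+1) i (by omega) (by omega),
        blockIdx_last ms m i (by omega) (by omega)]
  have hcompat1 : ∀ i : Fin (s + m),
      blockIdx (ms ++ [m+1]) ((insF h1 p1 i : Fin (s+m+1)) : ℕ) = blockIdx (ms ++ [m]) (i : ℕ) := by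
    intro i
    rw [insF_val_lt h1 p1 i (by exact i.isLt)]
    exact hbig i i.isLt
  have hiblock : ∀ i : Fin (s+m), (blockIdx (ms++[m]) (i:ℕ) ≠ ms.length ↔ (i:ℕ) < s) := by
    intro i
    constructor
    · intro hne
      by_contra hge
      push_neg at hge
      exact hne (blockIdx_last ms m i (by omega) i.isLt)
    · intro hlt
      rw [blockIdx_append_lt ms m i hlt]
      exact Nat.ne_of_lt (blockIdx_lt_length ms i (by omega))
  rw [Gp, master h1 p1 (ms ++ [m+1]) (ms ++ [m]) hcompat1
    (fun P => W x t P.card (P.card - scount P))]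
  set A := univ.filter (fun Q : Finset (Finset (Fin (s+m))) =>
    IsPartition Q ∧ Inhom (ms ++ [m]) Q) with hA
  set I := univ.filter (fun i : Fin (s + m) => s ≤ (i : ℕ)) with hI
  -- per-Q rewrite
  have hmain : ∀ Q ∈ A,
      (W x t (sIns h1 p1 Q).card ((sIns h1 p1 Q).card - scount (sIns h1 p1 Q))
        + ∑ B ∈ Q.filter (fun B : Finset (Fin (s+m)) =>
            ∀ i ∈ B, blockIdx (ms ++ [m]) (i : ℕ) ≠ blockIdx (ms ++ [m+1]) ((p1 : Fin (s+m+1)) : ℕ)),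
          W x t (jIns h1 p1 Q B).card ((jIns h1 p1 Q B).card - scount (jIns h1 p1 Q B)))
      = x * W x t Q.card (Q.card - scount Q)
        - (m : ℝ) * W x t Q.card (Q.card - scount Q)
        - ∑ i ∈ I, (if ({i} : Finset (Fin (s+m))) ∈ Q
            then t * W x t (Q.card - 1) (Q.card - scount Q) else 0) := by
    intro Q hQ
    rw [hA, Finset.mem_filter] at hQ
    obtain ⟨-, hpart, hinh⟩ := hQ
    have hfilt : Q.filter (fun B : Finset (Fin (s+m)) =>
        ∀ i ∈ B, blockIdx (ms ++ [m]) (i : ℕ) ≠ blockIdx (ms ++ [m+1]) ((p1 : Fin (s+m+1)) : ℕ))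
        = Q.filter (fun B : Finset (Fin (s+m)) => ∀ i ∈ B, (i : ℕ) < s) := by
      apply Finset.filter_congr
      intro B _
      rw [hKp1]
      constructor
      · intro hall i hi
        exact (hiblock i).mp (hall i hi)
      · intro hall i hi
        exact (hiblock i).mpr (hall i hi)
    rw [hfilt]
    have hsplit := Finset.sum_filter_add_sum_filter_not Q
      (fun B : Finset (Fin (s+m)) => ∀ i ∈ B, (i : ℕ) < s)
      (fun B => W x t (jIns h1 p1 Q B).card ((jIns h1 p1 Q B).card - scount (jIns h1 p1 Q B)))
    have hperQ := perQ x t h1 p1 hpart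
    -- bad sum via image
    have himg : Q.filter (fun B : Finset (Fin (s+m)) => ¬ ∀ i ∈ B, (i : ℕ) < s)
        = I.image (fun i => blockOf Q i) := by
      ext B
      rw [Finset.mem_filter, Finset.mem_image]
      constructor
      · rintro ⟨hBQ, hbad⟩
        push_neg at hbad
        obtain ⟨i, hiB, his⟩ := hbad
        exact ⟨i, by rw [hI, Finset.mem_filter]; exact ⟨Finset.mem_univ _, by omega⟩,
          (blockOf_eq hpart hBQ hiB).symm ▸ rfl⟩
      · rintro ⟨i, hiI, rfl⟩
        rw [hI, Finset.mem_filter] at hiI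
        obtain ⟨hBQ, hiB⟩ := blockOf_spec (hpart.2.1 i)
        refine ⟨hBQ, ?_⟩
        push_neg
        exact ⟨i, hiB, by omega⟩
    have hinjI : ∀ a ∈ I, ∀ b ∈ I, blockOf Q a = blockOf Q b → a = b := by
      intro a ha b hb hab
      rw [hI, Finset.mem_filter] at ha hb
      obtain ⟨hBa, haB⟩ := blockOf_spec (hpart.2.1 a)
      have hbB : b ∈ blockOf Q a := by
        rw [hab]
        exact (blockOf_spec (hpart.2.1 b)).2
      by_contra hne
      have := hinh _ hBa a haB b hbB hne
      rw [blockIdx_last ms m a (by omega) a.isLt, blockIdx_last ms m b (by omega) b.isLt] at this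
      exact this rfl
    have hbadsum : ∑ B ∈ Q.filter (fun B : Finset (Fin (s+m)) => ¬ ∀ i ∈ B, (i : ℕ) < s),
        W x t (jIns h1 p1 Q B).card ((jIns h1 p1 Q B).card - scount (jIns h1 p1 Q B))
        = ∑ i ∈ I, (W x t Q.card (Q.card - scount Q)
            + if ({i} : Finset (Fin (s+m))) ∈ Q
              then t * W x t (Q.card - 1) (Q.card - scount Q) else 0) := by
      rw [himg, Finset.sum_image hinjI]
      apply Finset.sum_congr rfl
      intro i hiI
      have hBQ := (blockOf_spec (hpart.2.1 i)).1
      rw [jIns_W x t h1 p1 hpart hBQ]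
      by_cases hsing : ({i} : Finset (Fin (s+m))) ∈ Q
      · have hc : (blockOf Q i).card = 1 := (blockOf_card_one_iff hpart i).mpr hsing
        rw [if_pos hc, if_pos hsing, W_succ]
      · have hc : ¬ (blockOf Q i).card = 1 := fun hcc => hsing ((blockOf_card_one_iff hpart i).mp hcc)
        rw [if_neg hc, if_neg hsing, add_zero]
    rw [Finset.sum_add_distrib, Finset.sum_const,
      show I.card = m from card_I s m, nsmul_eq_mul] at hbadsum
    linarith [hperQ, hsplit, hbadsum]
  rw [Finset.sum_congr rfl hmain]
  rw [Finset.sum_sub_distrib, Finset.sum_sub_distrib, ← Finset.mul_sum, ← Finset.mul_sum,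
    Finset.sum_comm]
  have hswap : ∑ i ∈ I, ∑ Q ∈ A, (if ({i} : Finset (Fin (s+m))) ∈ Q
      then t * W x t (Q.card - 1) (Q.card - scount Q) else 0)
      = ∑ _i ∈ I, t * Gp x t (s + m - 1) sm := by
    apply Finset.sum_congr rfl
    intro i hiI
    rw [hI, Finset.mem_filter] at hiI
    have hsi : s ≤ (i : ℕ) := hiI.2
    have h2 : (s + m - 1) + 1 = s + m := by omega
    have hcompat2 : ∀ j : Fin (s + m - 1),
        blockIdx (ms ++ [m]) ((insF h2 i j : Fin (s+m)) : ℕ) = blockIdx sm (j : ℕ) := by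
      intro j
      have hjlt := j.isLt
      by_cases hji : (j : ℕ) < (i : ℕ)
      · rw [insF_val_lt h2 i j hji, (hbi j (by omega)).symm]
      · push_neg at hji
        rw [insF_val_ge h2 i j hji,
          blockIdx_last ms m ((j : ℕ) + 1) (by omega) (by omega),
          hbi j (by omega), blockIdx_last ms m (j : ℕ) (by omega) (by omega)]
    rw [hA, master h2 i (ms ++ [m]) sm hcompat2
      (fun Q => if ({i} : Finset (Fin (s+m))) ∈ Q
        then t * W x t (Q.card - 1) (Q.card - scount Q) else 0),
      Gp, Finset.mul_sum]
    apply Finset.sum_congr rfl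
    intro R hR
    rw [Finset.mem_filter] at hR
    obtain ⟨-, hpartR, -⟩ := hR
    have hzero : ∀ B ∈ R.filter (fun B : Finset (Fin (s + m - 1)) =>
        ∀ j ∈ B, blockIdx sm (j : ℕ) ≠ blockIdx (ms ++ [m]) ((i : Fin (s+m)) : ℕ)),
        (if ({i} : Finset (Fin (s+m))) ∈ jIns h2 i R B
          then t * W x t ((jIns h2 i R B).card - 1) ((jIns h2 i R B).card - scount (jIns h2 i R B))
          else 0) = 0 := by
      intro B hB
      exact if_neg (singleton_not_mem_jIns h2 i (hpartR.1 B (Finset.mem_of_mem_filter _ hB)))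
    rw [Finset.sum_congr rfl hzero, Finset.sum_const, smul_zero, add_zero]
    rw [if_pos (singleton_mem_sIns h2 i R), sIns_card h2 i hpartR.1, sIns_scount h2 i hpartR.1,
      show R.card + 1 - 1 = R.card from by omega,
      show R.card + 1 - (scount R + 1) = R.card - scount R from by omega]
  rw [hswap, Finset.sum_const, show I.card = m from card_I s m, nsmul_eq_mul]
  rw [Gp, Gp]
  rw [hA]
  ring

lemma Gp_nil (x t : ℝ) : Gp x t 0 ([] : List ℕ) = 1 := by
  rw [Gp]
  have hfilt : univ.filter (fun P : Finset (Finset (Fin 0)) => IsPartition P ∧ Inhom ([] : List ℕ) P)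
      = {(∅ : Finset (Finset (Fin 0)))} := by
    ext P
    simp only [Finset.mem_filter, Finset.mem_univ, true_and, Finset.mem_singleton]
    constructor
    · rintro ⟨⟨hne, -, -⟩, -⟩
      by_contra hP
      obtain ⟨B, hB⟩ := Finset.nonempty_iff_ne_empty.mpr hP
      obtain ⟨j, -⟩ := hne B hB
      exact absurd j.isLt (Nat.not_lt_zero _)
    · rintro rfl
      refine ⟨⟨?_, ?_, ?_⟩, ?_⟩
      · intro B hB
        exact absurd hB (Finset.notMem_empty B)
      · intro i
        exact absurd i.isLt (Nat.not_lt_zero _)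
      · intro B hB
        exact absurd hB (Finset.notMem_empty B)
      · intro B hB
        exact absurd hB (Finset.notMem_empty B)
  rw [hfilt, Finset.sum_singleton, Finset.card_empty]
  have : scount (∅ : Finset (Finset (Fin 0))) = 0 := by
    rw [scount, Finset.filter_empty, Finset.card_empty]
  rw [this]
  simp [W, charlierP]

lemma claim (x t : ℝ) : ∀ n : ℕ, ∀ ns : List ℕ, ns.sum = n → (∀ a ∈ ns, 0 < a) →
    (ns.map (charlierP x t)).prod = Gp x t ns.sum ns := by
  intro n
  induction n using Nat.strong_induction_on with
  | _ n IH =>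
  intro ns hsum hpos
  rcases ns.eq_nil_or_concat with rfl | ⟨ms, m, rfl⟩
  · simpa using (Gp_nil x t).symm
  rw [List.concat_eq_append] at *
  have hmpos : 0 < m := hpos m (by simp)
  have hposms : ∀ a ∈ ms, 0 < a := fun a ha => hpos a (by simp [ha])
  have hn : ms.sum + m = n := by simpa using hsum
  match m, hmpos with
  | 1, _ =>
    have hsum1 : (ms ++ [1]).sum = ms.sum + 1 := by simp
    rw [hsum1, stepA x t ms ms.sum rfl, ← IH ms.sum (by omega) ms rfl hposms]
    simp [charlierP]
    ring
  | (m2+2), _ =>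
    -- build the small list
    obtain ⟨sm, hsmpos, hsmsum, hsmbi, hsmprod⟩ :
        ∃ sm : List ℕ, (∀ a ∈ sm, 0 < a) ∧ sm.sum = ms.sum + m2 ∧
          (∀ i : ℕ, i < ms.sum + m2 → blockIdx sm i = blockIdx (ms ++ [m2+1]) i) ∧
          (sm.map (charlierP x t)).prod
            = (ms.map (charlierP x t)).prod * charlierP x t m2 := by
      rcases Nat.eq_zero_or_pos m2 with rfl | hm2
      · exact ⟨ms, hposms, by simp, fun i hi => (blockIdx_append_lt ms 1 i (by omega)).symm,
          by simp [charlierP]⟩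
      · refine ⟨ms ++ [m2], ?_, by simp, ?_, by simp⟩
        · intro a ha
          rcases List.mem_append.mp ha with ha | ha
          · exact hposms a ha
          · simp at ha
            omega
        · intro i hi
          by_cases hlt : i < ms.sum
          · rw [blockIdx_append_lt ms m2 i hlt, blockIdx_append_lt ms (m2+1) i hlt]
          · rw [blockIdx_last ms m2 i (by omega) (by omega),
              blockIdx_last ms (m2+1) i (by omega) (by omega)]
    have hstep := stepB x t ms (m2+1) (by omega) sm (by
      intro i hi
      exact hsmbi i (by omega))
    have hIH1 := IH (ms.sum + (m2+1)) (by omega) (ms ++ [m2+1]) (by simp) (by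
      intro a ha
      rcases List.mem_append.mp ha with ha | ha
      · exact hposms a ha
      · simp at ha
        omega)
    have hsumA : (ms ++ [m2+1]).sum = ms.sum + (m2+1) := by simp
    rw [hsumA] at hIH1
    have hIHsm := IH sm.sum (by omega) sm rfl hsmpos
    rw [hsmsum] at hIHsm
    have hsumB : (ms ++ [m2+2]).sum = ms.sum + (m2+1) + 1 := by
      simp only [List.sum_append, List.sum_cons, List.sum_nil]
      omega
    have hargB : ms.sum + (m2+1) - 1 = ms.sum + m2 := by omega
    rw [hsumB, show (m2+2) = m2+1+1 from rfl, hstep, hargB, ← hIH1, ← hIHsm, hsmprod]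
    rw [List.map_append, List.prod_append, List.map_append, List.prod_append]
    have hrec : charlierP x t (m2+1+1) = (x - ((m2 : ℝ) + 1)) * charlierP x t (m2+1)
        - t * ((m2 : ℝ) + 1) * charlierP x t m2 := rfl
    simp only [List.map_cons, List.map_nil, List.prod_cons, List.prod_nil, hrec]
    push_cast
    ring

/-- Linearization of products of centered Charlier polynomials via
inhomogeneous partitions. -/
theorem statement3 (x t : ℝ) (ns : List ℕ) (hne : ns ≠ [])
    (hpos : ∀ m ∈ ns, 0 < m) :
    (ns.map (charlierP x t)).prod =
      ∑ P ∈ (univ : Finset (Finset (Finset (Fin ns.sum)))).filter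
          (fun P => IsPartition P ∧ Inhom ns P),
        ∑ l ∈ Finset.range (P.card - scount P + 1),
          ((P.card - scount P).choose l : ℝ) * t ^ l *
            charlierP x t (P.card - l) := by
  rw [claim x t ns.sum ns rfl hpos]
  rfl
end
end

section
/- For every real q with −1 < q < 1, all real x, all t ≥ 0, and all positive integers n_1, …, n_k with n = n_1 + ⋯ + n_k: in the unique expansion ∏_{j=1}^k H_{q,n_j}(x,t) = Σ_{m=0}^n c_m · H_{q,m}(x,t) of the product in the basis of continuous q-Hermite polynomials (which exists and is unique since H_{q,m} is monic of degree m), the constant coefficient is c_0 = (√t)^n · Σ_{π ∈ 𝒫_2(n_1,…,n_k)} q^{rc(π)}, the sum being over all inhomogeneous pair partitions of {1,…,n}. -/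
open Finset MeasureTheory ProbabilityTheory
open scoped Classical

noncomputable section

namespace QH

/-! ### q-integer lemmas -/

lemma qInt_zero (q : ℝ) : qInt q 0 = 0 := by simp [qInt]

lemma qInt_one (q : ℝ) : qInt q 1 = 1 := by simp [qInt]

lemma qInt_succ (q : ℝ) (m : ℕ) : qInt q (m + 1) = qInt q m + q ^ m :=
  Finset.sum_range_succ _ _

lemma qInt_succ' (q : ℝ) (m : ℕ) : qInt q (m + 1) = 1 + q * qInt q m := by
  unfold qInt
  rw [Finset.sum_range_succ', pow_zero, add_comm, Finset.mul_sum]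
  congr 1
  exact Finset.sum_congr rfl fun x _ => by ring

lemma qInt_add (q : ℝ) (k m : ℕ) : qInt q (k + m) = qInt q k + q ^ k * qInt q m := by
  induction m with
  | zero => simp [qInt_zero]
  | succ m ih =>
      have : k + (m + 1) = (k + m) + 1 := by omega
      rw [this, qInt_succ, ih, qInt_succ, pow_add]
      ring

/-! ### table operators -/

def Tq (q t : ℝ) (f : ℕ → ℕ → ℝ) : ℕ → ℕ → ℝ := fun a b =>
  (match b with | 0 => 0 | Nat.succ b' => f a b') + t * q ^ b * qInt q (a + 1) * f (a + 1) b

def DZ (q : ℝ) (f : ℕ → ℕ → ℝ) : ℕ → ℕ → ℝ := fun a b => qInt q (b + 1) * f a (b + 1)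

lemma Tq_smul (q t r : ℝ) (f : ℕ → ℕ → ℝ) :
    Tq q t (fun a b => r * f a b) = fun a b => r * Tq q t f a b := by
  funext a b
  cases b with
  | zero => simp only [Tq]; ring
  | succ b' => simp only [Tq]; ring

lemma Tq_zero (q t : ℝ) : Tq q t (fun _ _ => 0) = fun _ _ => 0 := by
  funext a b
  cases b with
  | zero => simp [Tq]
  | succ b' => simp [Tq]

lemma DZ_Tq (q t : ℝ) (f : ℕ → ℕ → ℝ) :
    DZ q (Tq q t f) = fun a b => f a b + q * Tq q t (DZ q f) a b := by
  funext a b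
  cases b with
  | zero =>
      simp only [DZ, Tq, qInt_one]
      rw [qInt_one]
      ring
  | succ b' =>
      simp only [DZ, Tq]
      rw [qInt_succ' q (b' + 1)]
      ring

lemma DZ_iter (q t : ℝ) (g : ℕ → ℕ → ℕ → ℝ) (hg : ∀ j, g (j + 1) = Tq q t (g j))
    (h0 : ∀ a b, g 0 a (b + 1) = 0) :
    ∀ j, DZ q (g (j + 1)) = fun a b => qInt q (j + 1) * g j a b := by
  intro j
  induction j with
  | zero =>
      have hz : DZ q (g 0) = fun _ _ => 0 := by
        funext a b; simp [DZ, h0]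
      rw [hg 0, DZ_Tq, hz, Tq_zero]
      funext a b; simp [qInt_one]
  | succ j ih =>
      rw [hg (j + 1), DZ_Tq, ih, Tq_smul]
      funext a b
      rw [← hg j, qInt_succ' q (j + 1)]
      ring

/-! ### diagonal sums -/

def dg (f : ℕ → ℕ → ℝ) (σ : ℕ) : ℝ := ∑ a ∈ Finset.range (σ + 1), f a (σ - a)

def prevdg (f : ℕ → ℕ → ℝ) : ℕ → ℝ
  | 0 => 0
  | σ + 1 => dg f σ

lemma dg_smul (c : ℝ) (f : ℕ → ℕ → ℝ) (σ : ℕ) :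
    dg (fun a b => c * f a b) σ = c * dg f σ := by
  simp [dg, Finset.mul_sum]

lemma dg_Tq (q t : ℝ) (f : ℕ → ℕ → ℝ) (σ : ℕ) :
    dg (Tq q t f) σ =
      prevdg f σ + t * qInt q (σ + 1) * dg f (σ + 1) - t * dg (DZ q f) σ := by
  have expand : dg (Tq q t f) σ =
      (∑ a ∈ Finset.range (σ + 1),
        (match σ - a with | 0 => (0:ℝ) | Nat.succ b' => f a b')) +
      ∑ a ∈ Finset.range (σ + 1), t * q ^ (σ - a) * qInt q (a + 1) * f (a + 1) (σ - a) := by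
    rw [dg, ← Finset.sum_add_distrib]
    rfl
  -- first piece
  have first : (∑ a ∈ Finset.range (σ + 1),
      (match σ - a with | 0 => (0:ℝ) | Nat.succ b' => f a b')) = prevdg f σ := by
    cases σ with
    | zero => simp [prevdg]
    | succ σ' =>
        rw [Finset.sum_range_succ]
        have h1 : σ' + 1 - (σ' + 1) = 0 := by omega
        rw [h1]
        have h2 : ∀ a ∈ Finset.range (σ' + 1),
            (match σ' + 1 - a with | 0 => (0:ℝ) | Nat.succ b' => f a b') = f a (σ' - a) := by
          intro a ha
          have : σ' + 1 - a = (σ' - a) + 1 := by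
            have := Finset.mem_range.mp ha; omega
          rw [this]
        rw [Finset.sum_congr rfl h2]
        simp [prevdg, dg]
  -- second piece
  have second : (∑ a ∈ Finset.range (σ + 1), t * q ^ (σ - a) * qInt q (a + 1) * f (a + 1) (σ - a))
      = t * qInt q (σ + 1) * dg f (σ + 1) - t * dg (DZ q f) σ := by
    have lhs_eq : (∑ a ∈ Finset.range (σ + 1), t * q ^ (σ - a) * qInt q (a + 1) * f (a + 1) (σ - a))
        = t * ∑ a ∈ Finset.range (σ + 2), q ^ (σ + 1 - a) * qInt q a * f a (σ + 1 - a) := by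
      rw [Finset.mul_sum]
      conv_rhs => rw [Finset.sum_range_succ']
      rw [qInt_zero]
      simp only [mul_zero, zero_mul, add_zero, Nat.sub_zero]
      apply Finset.sum_congr rfl
      intro a ha
      have h1 : σ + 1 - (a + 1) = σ - a := by omega
      rw [h1]; ring
    have ext : (∑ a ∈ Finset.range (σ + 1), DZ q f a (σ - a))
        = ∑ a ∈ Finset.range (σ + 2), qInt q (σ + 1 - a) * f a (σ + 1 - a) := by
      conv_rhs => rw [Finset.sum_range_succ]
      have z : σ + 1 - (σ + 1) = 0 := by omega
      rw [z, qInt_zero, zero_mul, add_zero]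
      apply Finset.sum_congr rfl
      intro a ha
      have haσ : a ≤ σ := by have := Finset.mem_range.mp ha; omega
      simp only [DZ]
      have h1 : σ - a + 1 = σ + 1 - a := by omega
      rw [h1]
    have rhs_eq : qInt q (σ + 1) * dg f (σ + 1) - dg (DZ q f) σ
        = ∑ a ∈ Finset.range (σ + 2), q ^ (σ + 1 - a) * qInt q a * f a (σ + 1 - a) := by
      rw [dg, dg, Finset.mul_sum, ext, ← Finset.sum_sub_distrib]
      apply Finset.sum_congr rfl
      intro a ha
      have h3 : qInt q (σ + 1) = qInt q (σ + 1 - a) + q ^ (σ + 1 - a) * qInt q a := by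
        conv_lhs => rw [show (σ + 1) = (σ + 1 - a) + a from by
          have := Finset.mem_range.mp ha; omega, qInt_add]
      rw [h3]; ring
    rw [lhs_eq, ← rhs_eq]
    ring
  rw [expand, first, second]
  ring


/-! ### q-Hermite recursion -/

lemma qHermite_two_step (q x t : ℝ) (m : ℕ) :
    qHermite q x t (m + 2)
      = x * qHermite q x t (m + 1) - t * qInt q (m + 1) * qHermite q x t m := rfl

lemma qHermite_mul_x (q x t : ℝ) (σ : ℕ) :
    x * qHermite q x t σ
      = qHermite q x t (σ + 1) + t * qInt q σ * qHermite q x t (σ - 1) := by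
  cases σ with
  | zero => simp [qHermite, qInt_zero]
  | succ σ' =>
      rw [qHermite_two_step]
      simp only [Nat.add_sub_cancel]
      ring

/-! ### H-sums and the spine recursion -/

def HS (q t x : ℝ) (f : ℕ → ℕ → ℝ) (W : ℕ) : ℝ :=
  ∑ σ ∈ Finset.range W, dg f σ * qHermite q x t σ

lemma HS_stable (q t x : ℝ) (f : ℕ → ℕ → ℝ) {W W' : ℕ} (h : W ≤ W')
    (hv : ∀ σ, W ≤ σ → dg f σ = 0) : HS q t x f W' = HS q t x f W := by
  unfold HS
  apply (Finset.sum_subset (Finset.range_subset_range.mpr h) _).symm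
  intro σ _ hσ
  rw [hv σ (by simpa using hσ), zero_mul]

lemma spine (q t x c : ℝ) (g g' : ℕ → ℕ → ℝ) (W : ℕ)
    (hDZ : DZ q g' = fun a b => c * g a b)
    (hs : dg g' W = 0) (hs2 : dg g' (W + 1) = 0) :
    HS q t x (Tq q t g') (W + 1)
      = x * HS q t x g' (W + 1) - t * c * HS q t x g (W + 1) := by
  have hdz : ∀ σ, dg (DZ q g') σ = c * dg g σ := by
    intro σ; rw [hDZ, dg_smul]
  have SA : (∑ σ ∈ Finset.range (W + 1), prevdg g' σ * qHermite q x t σ)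
      = ∑ σ ∈ Finset.range (W + 1), dg g' σ * qHermite q x t (σ + 1) := by
    rw [Finset.sum_range_succ', Finset.sum_range_succ]
    simp only [prevdg, hs, zero_mul, add_zero]
  have SB : (∑ σ ∈ Finset.range (W + 1), t * qInt q (σ + 1) * dg g' (σ + 1) * qHermite q x t σ)
      = ∑ σ ∈ Finset.range (W + 1), t * qInt q σ * dg g' σ * qHermite q x t (σ - 1) := by
    rw [Finset.sum_range_succ, Finset.sum_range_succ']
    simp only [hs2, qInt_zero, mul_zero, zero_mul, add_zero, mul_zero, zero_mul]
    apply Finset.sum_congr rfl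
    intro σ _
    simp only [Nat.add_sub_cancel]
  have main : x * HS q t x g' (W + 1)
      = (∑ σ ∈ Finset.range (W + 1), dg g' σ * qHermite q x t (σ + 1))
        + ∑ σ ∈ Finset.range (W + 1), t * qInt q σ * dg g' σ * qHermite q x t (σ - 1) := by
    unfold HS
    rw [Finset.mul_sum, ← Finset.sum_add_distrib]
    apply Finset.sum_congr rfl
    intro σ _
    have h1 : x * (dg g' σ * qHermite q x t σ) = dg g' σ * (x * qHermite q x t σ) := by ring
    rw [h1, qHermite_mul_x]
    ring
  have expand : HS q t x (Tq q t g') (W + 1)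
      = (∑ σ ∈ Finset.range (W + 1), prevdg g' σ * qHermite q x t σ)
        + (∑ σ ∈ Finset.range (W + 1), t * qInt q (σ + 1) * dg g' (σ + 1) * qHermite q x t σ)
        - t * c * HS q t x g (W + 1) := by
    unfold HS
    have e : ∀ σ ∈ Finset.range (W + 1), dg (Tq q t g') σ * qHermite q x t σ
        = (prevdg g' σ * qHermite q x t σ
            + t * qInt q (σ + 1) * dg g' (σ + 1) * qHermite q x t σ)
          - t * c * (dg g σ * qHermite q x t σ) := by
      intro σ _
      rw [dg_Tq, hdz]
      ring
    rw [Finset.sum_congr rfl e, Finset.sum_sub_distrib, Finset.sum_add_distrib,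
      ← Finset.mul_sum]
  rw [expand, SA, SB, main]

/-! ### partitions, weights, combinatorial tables -/

def crossQ {n : ℕ} (P : Finset (Finset (Fin n))) : Finset (Fin n × Fin n × Fin n × Fin n) :=
  Finset.univ.filter fun p => p.1 < p.2.1 ∧ p.2.1 < p.2.2.1 ∧ p.2.2.1 < p.2.2.2 ∧
    SameBlock P p.1 p.2.2.1 ∧ SameBlock P p.2.1 p.2.2.2

def cross {n : ℕ} (P : Finset (Finset (Fin n))) : ℕ := (crossQ P).card

def wgt (q t : ℝ) {n : ℕ} (P : Finset (Finset (Fin n))) : ℝ :=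
  t ^ s2count P * q ^ (cross P + sd P)

def sings {n : ℕ} (P : Finset (Finset (Fin n))) : Finset (Fin n) :=
  Finset.univ.filter fun i => ({i} : Finset (Fin n)) ∈ P

def Pi2 (N : ℕ) (L : List ℕ) : Finset (Finset (Finset (Fin N))) :=
  Finset.univ.filter fun P => IsPartition P ∧ Inhom L P ∧ ∀ B ∈ P, B.card ≤ 2

def FF (q t : ℝ) (N : ℕ) (L : List ℕ) (c : ℕ) (a b : ℕ) : ℝ :=
  ∑ P ∈ Pi2 N L,
    if ((sings P).filter fun i : Fin N => (i : ℕ) < c).card = a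
        ∧ ((sings P).filter fun i : Fin N => c ≤ (i : ℕ)).card = b then wgt q t P else 0

def dsum (q t : ℝ) (N : ℕ) (L : List ℕ) (σ : ℕ) : ℝ :=
  ∑ P ∈ Pi2 N L, if (sings P).card = σ then wgt q t P else 0

lemma sings_card_split {n : ℕ} (c : ℕ) (P : Finset (Finset (Fin n))) :
    ((sings P).filter fun i : Fin n => (i : ℕ) < c).card
      + ((sings P).filter fun i : Fin n => c ≤ (i : ℕ)).card = (sings P).card := by
  have h1 : ((sings P).filter fun i : Fin n => c ≤ (i : ℕ))
      = ((sings P).filter fun i : Fin n => ¬ ((i : ℕ) < c)) := by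
    apply Finset.filter_congr
    intro i _
    simp [not_lt]
  rw [h1, Finset.card_filter_add_card_filter_not]

lemma ite_collapse (X Y σ : ℕ) (w : ℝ) :
    (∑ a ∈ Finset.range (σ + 1), if X = a ∧ Y = σ - a then w else 0)
      = if X + Y = σ then w else 0 := by
  by_cases h : X + Y = σ
  · rw [Finset.sum_eq_single X]
    · have h1 : Y = σ - X := by omega
      rw [if_pos h, if_pos ⟨rfl, h1⟩]
    · intro b _ hb
      rw [if_neg]
      rintro ⟨h1, _⟩
      exact hb h1.symm
    · intro hX
      exfalso
      exact hX (Finset.mem_range.mpr (by omega))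
  · rw [if_neg h]
    apply Finset.sum_eq_zero
    intro a ha
    rw [if_neg]
    rintro ⟨h1, h2⟩
    exact h (by have := Finset.mem_range.mp ha; omega)

lemma dg_FF (q t : ℝ) (N : ℕ) (L : List ℕ) (c : ℕ) (σ : ℕ) :
    dg (FF q t N L c) σ = dsum q t N L σ := by
  unfold dg FF dsum
  rw [Finset.sum_comm]
  apply Finset.sum_congr rfl
  intro P _
  rw [ite_collapse, sings_card_split]

lemma sings_card_le {n : ℕ} (P : Finset (Finset (Fin n))) : (sings P).card ≤ n := by
  calc (sings P).card ≤ (Finset.univ : Finset (Fin n)).card := Finset.card_filter_le _ _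
  _ = n := by simp

lemma dsum_vanish (q t : ℝ) (N : ℕ) (L : List ℕ) {σ : ℕ} (h : N < σ) :
    dsum q t N L σ = 0 := by
  apply Finset.sum_eq_zero
  intro P _
  rw [if_neg]
  intro h1
  have := sings_card_le P
  omega

lemma FF_above (q t : ℝ) (N : ℕ) (L : List ℕ) (a b : ℕ) :
    FF q t N L N a (b + 1) = 0 := by
  apply Finset.sum_eq_zero
  intro P _
  rw [if_neg]
  rintro ⟨h1, h2⟩
  have hemp : ((sings P).filter fun i : Fin N => N ≤ (i : ℕ)) = ∅ := by
    rw [Finset.filter_eq_empty_iff]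
    intro i _
    simp only [not_le]
    exact i.isLt
  rw [hemp] at h2
  simp at h2

/-! ### polynomial extraction -/

def qHP (q t : ℝ) : ℕ → Polynomial ℝ
  | 0 => 1
  | 1 => Polynomial.X
  | m + 2 => Polynomial.X * qHP q t (m + 1) - Polynomial.C (t * qInt q (m + 1)) * qHP q t m

lemma qHP_eval (q t x : ℝ) : ∀ m, (qHP q t m).eval x = qHermite q x t m
  | 0 => by simp [qHP, qHermite]
  | 1 => by simp [qHP, qHermite]
  | m + 2 => by
      have e1 := qHP_eval q t x (m + 1)
      have e0 := qHP_eval q t x m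
      simp [qHP, qHermite_two_step, e1, e0]

lemma qHP_monic_deg (q t : ℝ) : ∀ m, (qHP q t m).Monic ∧ (qHP q t m).natDegree = m
  | 0 => ⟨Polynomial.monic_one, by simp [qHP]⟩
  | 1 => ⟨Polynomial.monic_X, by simp [qHP]⟩
  | m + 2 => by
      obtain ⟨h1m, h1d⟩ := qHP_monic_deg q t (m + 1)
      obtain ⟨h0m, h0d⟩ := qHP_monic_deg q t m
      have hXm : (Polynomial.X * qHP q t (m + 1)).Monic := Polynomial.monic_X.mul h1m
      have hXd : (Polynomial.X * qHP q t (m + 1)).natDegree = m + 2 := by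
        rw [Polynomial.natDegree_X_mul h1m.ne_zero, h1d]
      have hCd : (Polynomial.C (t * qInt q (m + 1)) * qHP q t m).natDegree < m + 2 := by
        have := Polynomial.natDegree_C_mul_le (t * qInt q (m + 1)) (qHP q t m)
        omega
      have hdeg : (Polynomial.C (t * qInt q (m + 1)) * qHP q t m).degree
          < (Polynomial.X * qHP q t (m + 1)).degree := by
        apply Polynomial.degree_lt_degree
        omega
      constructor
      · exact hXm.sub_of_left hdeg
      · rw [show qHP q t (m + 2) = Polynomial.X * qHP q t (m + 1)
            - Polynomial.C (t * qInt q (m + 1)) * qHP q t m from rfl]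
        rw [Polynomial.natDegree_sub_eq_left_of_natDegree_lt (by omega), hXd]

lemma coeff_unique (q t : ℝ) (n : ℕ) (e : ℕ → ℝ)
    (h : ∀ x : ℝ, (∑ m ∈ Finset.range (n + 1), e m * qHermite q x t m) = 0) :
    ∀ m ≤ n, e m = 0 := by
  have hp : (∑ m ∈ Finset.range (n + 1), Polynomial.C (e m) * qHP q t m) = 0 := by
    apply Polynomial.funext
    intro x
    rw [Polynomial.eval_finset_sum]
    simp only [Polynomial.eval_mul, Polynomial.eval_C, qHP_eval, Polynomial.eval_zero]
    exact h x
  intro m hm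
  by_contra hme
  set S : Finset ℕ := (Finset.range (n + 1)).filter (fun k => e k ≠ 0) with hS
  have hSne : S.Nonempty := ⟨m, by simp [hS, hme]; omega⟩
  set M := S.max' hSne with hM
  have hMS : M ∈ S := S.max'_mem hSne
  have hMn : M ≤ n := by
    have := (Finset.mem_filter.mp hMS).1
    simp at this; omega
  have hcoeff : (∑ k ∈ Finset.range (n + 1), Polynomial.C (e k) * qHP q t k).coeff M = e M := by
    rw [Polynomial.finset_sum_coeff]
    rw [Finset.sum_eq_single M]
    · have h2 := (qHP_monic_deg q t M).1
      have h3 := (qHP_monic_deg q t M).2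
      have hco : (qHP q t M).coeff M = 1 := by
        have hcn := h2.coeff_natDegree
        rwa [h3] at hcn
      rw [Polynomial.coeff_C_mul, hco, mul_one]
    · intro k hk hkM
      rw [Polynomial.coeff_C_mul]
      rcases lt_or_gt_of_ne hkM with hlt | hgt
      · -- k < M : e k might be nonzero, but coeff is zero
        have : (qHP q t k).coeff M = 0 := by
          apply Polynomial.coeff_eq_zero_of_natDegree_lt
          rw [(qHP_monic_deg q t k).2]
          omega
        rw [this, mul_zero]
      · -- k > M : e k = 0
        have : e k = 0 := by
          by_contra hek
          have : k ∈ S := by simp [hS, hek]; exact Nat.lt_succ_iff.mp (Finset.mem_range.mp hk)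
          have := S.le_max' k this
          omega
        rw [this]
        simp
    · intro hM'
      exfalso
      exact hM' (Finset.mem_range.mpr (by omega))
  rw [hp] at hcoeff
  have hez : e M = 0 := by simpa using hcoeff.symm
  exact (Finset.mem_filter.mp hMS).2 hez


/-! ### blockIdx lemmas -/

lemma take_sum_le (ns : List ℕ) (j : ℕ) : (ns.take j).sum ≤ ns.sum := by
  conv_rhs => rw [← List.take_append_drop j ns]
  rw [List.sum_append]
  omega

lemma blockIdx_append_lt (ns : List ℕ) (m i : ℕ) (h : i < ns.sum) :
    blockIdx (ns ++ [m]) i = blockIdx ns i := by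
  unfold blockIdx
  rw [List.length_append, List.length_singleton, List.range_succ, List.countP_append]
  have h2 : List.countP (fun j => decide (((ns ++ [m]).take (j + 1)).sum ≤ i)) ([ns.length])
      = 0 := by
    simp only [List.countP_cons, List.countP_nil]
    have : (ns ++ [m]).take (ns.length + 1) = ns ++ [m] := by
      apply List.take_of_length_le
      rw [List.length_append, List.length_singleton]
    rw [this, List.sum_append]
    simp only [List.sum_cons, List.sum_nil]
    have hno : ¬ (ns.sum + (m + 0) ≤ i) := by omega
    simp [hno]
    omega
  rw [h2, add_zero]
  apply List.countP_congr
  intro j hj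
  have hjl : j < ns.length := List.mem_range.mp hj
  have : (ns ++ [m]).take (j + 1) = ns.take (j + 1) := by
    rw [List.take_append_of_le_length (by omega)]
  rw [this]

lemma blockIdx_append_last (ns : List ℕ) (m i : ℕ) (h1 : ns.sum ≤ i) (h2 : i < ns.sum + m) :
    blockIdx (ns ++ [m]) i = ns.length := by
  unfold blockIdx
  rw [List.length_append, List.length_singleton, List.range_succ, List.countP_append]
  have hlast : List.countP (fun j => decide (((ns ++ [m]).take (j + 1)).sum ≤ i)) ([ns.length])
      = 0 := by
    simp only [List.countP_cons, List.countP_nil]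
    have : (ns ++ [m]).take (ns.length + 1) = ns ++ [m] := by
      apply List.take_of_length_le
      rw [List.length_append, List.length_singleton]
    rw [this, List.sum_append]
    simp only [List.sum_cons, List.sum_nil]
    have hno : ¬ (ns.sum + (m + 0) ≤ i) := by omega
    simp [hno]
    omega
  rw [hlast, add_zero]
  have : List.countP (fun j => decide (((ns ++ [m]).take (j + 1)).sum ≤ i))
      (List.range ns.length) = (List.range ns.length).length := by
    rw [List.countP_eq_length]
    intro j hj
    have hjl : j < ns.length := List.mem_range.mp hj
    have he : (ns ++ [m]).take (j + 1) = ns.take (j + 1) := by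
      rw [List.take_append_of_le_length (by omega)]
    rw [he]
    have := take_sum_le ns (j + 1)
    simp only [decide_eq_true_eq]
    omega
  rw [this, List.length_range]

lemma blockIdx_lt_length (ns : List ℕ) (i : ℕ) (h : i < ns.sum) :
    blockIdx ns i < ns.length := by
  have hlen : 0 < ns.length := by
    rcases ns with _ | ⟨a, l⟩
    · simp at h
    · simp
  unfold blockIdx
  have hle : List.countP (fun j => decide ((ns.take (j + 1)).sum ≤ i)) (List.range ns.length)
      ≤ (List.range ns.length).length := List.countP_le_length
  rw [List.length_range] at hle
  rcases lt_or_eq_of_le hle with hlt | heq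
  · exact hlt
  · exfalso
    have heq' : List.countP (fun j => decide ((ns.take (j + 1)).sum ≤ i))
        (List.range ns.length) = (List.range ns.length).length := by
      rw [List.length_range]; exact heq
    have hall := List.countP_eq_length.mp heq' 
    have hmem : ns.length - 1 ∈ List.range ns.length := by
      rw [List.mem_range]; omega
    have hthis := hall _ hmem
    simp only [decide_eq_true_eq] at hthis
    rw [show ns.length - 1 + 1 = ns.length from by omega, List.take_length] at hthis
    omega

lemma h1_fact (ns : List ℕ) (j : ℕ) :
    ∀ i < ns.sum + j, blockIdx (ns ++ [j + 1]) i = blockIdx (ns ++ [j]) i := by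
  intro i hi
  by_cases h : i < ns.sum
  · rw [blockIdx_append_lt _ _ _ h, blockIdx_append_lt _ _ _ h]
  · push_neg at h
    rw [blockIdx_append_last _ _ _ h (by omega), blockIdx_append_last _ _ _ h (by omega)]

lemma h3_fact (ns : List ℕ) (j : ℕ) :
    ∀ i < ns.sum + j,
      (blockIdx (ns ++ [j + 1]) i = blockIdx (ns ++ [j + 1]) (ns.sum + j) ↔ ns.sum ≤ i) := by
  intro i hi
  have hN : blockIdx (ns ++ [j + 1]) (ns.sum + j) = ns.length :=
    blockIdx_append_last _ _ _ (by omega) (by omega)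
  rw [hN]
  constructor
  · intro h
    by_contra hc
    push_neg at hc
    rw [blockIdx_append_lt _ _ _ hc] at h
    have := blockIdx_lt_length ns i hc
    omega
  · intro h
    exact blockIdx_append_last _ _ _ h (by omega)

/-! ### partition helper lemmas -/

lemma pair_block_mem {n : ℕ} {P : Finset (Finset (Fin n))} (hP : IsPartition P)
    (h2 : ∀ B ∈ P, B.card ≤ 2) {a b : Fin n} (hab : a ≠ b) (hs : SameBlock P a b) :
    ({a, b} : Finset (Fin n)) ∈ P := by
  obtain ⟨B, hB, haB, hbB⟩ := hs
  have hsub : ({a, b} : Finset (Fin n)) ⊆ B := by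
    intro x hx
    rcases Finset.mem_insert.mp hx with h | h
    · exact h ▸ haB
    · exact (Finset.mem_singleton.mp h) ▸ hbB
  have hcard : B.card ≤ ({a, b} : Finset (Fin n)).card := by
    rw [Finset.card_insert_of_notMem (by simp [hab]), Finset.card_singleton]
    exact h2 B hB
  rw [← Finset.eq_of_subset_of_card_le hsub hcard] at hB
  exact hB

lemma partner_cases {n : ℕ} {P : Finset (Finset (Fin n))} (hP : IsPartition P)
    (h2 : ∀ B ∈ P, B.card ≤ 2) {a c r : Fin n} (hac : a ≠ c) (h : SameBlock P a c)
    (hr : SameBlock P a r) : r = a ∨ r = c := by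
  have hB := pair_block_mem hP h2 hac h
  obtain ⟨C, hC, haC, hrC⟩ := hr
  have hCB : C = {a, c} := hP.2.2 C hC _ hB a haC (by simp)
  subst hCB
  rcases Finset.mem_insert.mp hrC with h | h
  · exact Or.inl h
  · exact Or.inr (Finset.mem_singleton.mp h)

lemma rc_eq_cross {n : ℕ} {P : Finset (Finset (Fin n))} (hP : IsPartition P)
    (h2 : ∀ B ∈ P, B.card ≤ 2) : rc P = cross P := by
  unfold rc cross crossQ
  congr 1
  apply Finset.filter_congr
  intro p _
  constructor
  · rintro ⟨a, b, c, d, e, _, _⟩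
    exact ⟨a, b, c, d, e⟩
  · rintro ⟨ha, hb, hc, hd, he⟩
    refine ⟨ha, hb, hc, hd, he, ?_, ?_⟩
    · intro r hr hsb
      rcases partner_cases hP h2 (ne_of_lt (lt_trans ha hb)) hd hsb with h | h
      · exact absurd (h ▸ hr) (lt_irrefl _)
      · exact le_of_eq h.symm
    · intro r hr hsb
      rcases partner_cases hP h2 (ne_of_lt (lt_trans hb hc)) he hsb with h | h
      · exact absurd (h ▸ hr) (lt_irrefl _)
      · exact le_of_eq h.symm

/-! ### base case -/

lemma Pi2_zero (L : List ℕ) : Pi2 0 L = {∅} := by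
  ext P
  simp only [Pi2, Finset.mem_filter, Finset.mem_univ, true_and, Finset.mem_singleton]
  constructor
  · rintro ⟨hP, _, _⟩
    by_contra hne
    obtain ⟨B, hB⟩ := Finset.nonempty_iff_ne_empty.mpr hne
    obtain ⟨i, _⟩ := hP.1 B hB
    exact i.elim0
  · rintro rfl
    refine ⟨⟨?_, ?_, ?_⟩, ?_, ?_⟩
    · intro B hB; exact absurd hB (Finset.notMem_empty B)
    · intro i; exact i.elim0
    · intro B hB; exact absurd hB (Finset.notMem_empty B)
    · intro B hB; exact absurd hB (Finset.notMem_empty B)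
    · intro B hB; exact absurd hB (Finset.notMem_empty B)

lemma wgt_empty (q t : ℝ) : wgt q t (∅ : Finset (Finset (Fin 0))) = 1 := by
  unfold wgt s2count cross crossQ sd
  simp

lemma sings_empty_part : sings (∅ : Finset (Finset (Fin 0))) = ∅ := by
  simp [sings]

/-! ### appending a zero block -/

lemma Pi2_append_zero (ns : List ℕ) : Pi2 ns.sum (ns ++ [0]) = Pi2 ns.sum ns := by
  unfold Pi2
  apply Finset.filter_congr
  intro P _
  have hb : ∀ i : Fin ns.sum, blockIdx (ns ++ [0]) (i : ℕ) = blockIdx ns (i : ℕ) := fun i =>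
    blockIdx_append_lt _ _ _ i.isLt
  have hI : Inhom (ns ++ [0]) P ↔ Inhom ns P := by
    unfold Inhom
    constructor
    · intro h B hB i hi j hj hne
      have := h B hB i hi j hj hne
      rwa [hb i, hb j] at this
    · intro h B hB i hi j hj hne
      have := h B hB i hi j hj hne
      rwa [hb i, hb j]
  rw [hI]


/-! ### lifting partitions of `Fin N` to `Fin (N + 1)` -/

def bup {N : ℕ} (B : Finset (Fin N)) : Finset (Fin (N + 1)) := B.map Fin.castSuccEmb

def pup {N : ℕ} (P : Finset (Finset (Fin N))) : Finset (Finset (Fin (N + 1))) := P.image bup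

def bdown {N : ℕ} (B : Finset (Fin (N + 1))) : Finset (Fin N) :=
  Finset.univ.filter fun y => Fin.castSucc y ∈ B

def pdown {N : ℕ} (P : Finset (Finset (Fin (N + 1)))) : Finset (Finset (Fin N)) := P.image bdown

lemma mem_bup {N : ℕ} {B : Finset (Fin N)} {x : Fin (N + 1)} :
    x ∈ bup B ↔ ∃ y ∈ B, Fin.castSucc y = x := by
  simp [bup, Fin.castSuccEmb, Fin.castAddEmb, Fin.castSucc, Fin.castAdd]

lemma castSucc_mem_bup {N : ℕ} {B : Finset (Fin N)} {y : Fin N} :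
    Fin.castSucc y ∈ bup B ↔ y ∈ B := by
  rw [mem_bup]
  constructor
  · rintro ⟨z, hz, hez⟩
    rwa [← Fin.castSucc_injective N hez]
  · intro h
    exact ⟨y, h, rfl⟩

lemma last_not_mem_bup {N : ℕ} (B : Finset (Fin N)) : Fin.last N ∉ bup B := by
  rw [mem_bup]
  rintro ⟨y, _, hy⟩
  exact absurd hy (Fin.ne_of_lt (Fin.castSucc_lt_last y))

lemma mem_bdown {N : ℕ} {B : Finset (Fin (N + 1))} {y : Fin N} :
    y ∈ bdown B ↔ Fin.castSucc y ∈ B := by simp [bdown]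

lemma bdown_bup {N : ℕ} (B : Finset (Fin N)) : bdown (bup B) = B := by
  ext y
  rw [mem_bdown, castSucc_mem_bup]

lemma bup_bdown {N : ℕ} {B : Finset (Fin (N + 1))} (h : Fin.last N ∉ B) :
    bup (bdown B) = B := by
  ext x
  rw [mem_bup]
  constructor
  · rintro ⟨y, hy, rfl⟩
    exact mem_bdown.mp hy
  · intro hx
    have hxl : x ≠ Fin.last N := by rintro rfl; exact h hx
    obtain ⟨y, rfl⟩ := Fin.exists_castSucc_eq.mpr hxl
    exact ⟨y, mem_bdown.mpr hx, rfl⟩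

lemma bup_injective {N : ℕ} : Function.Injective (bup (N := N)) := fun B C h => by
  rw [← bdown_bup B, h, bdown_bup]

lemma bup_card {N : ℕ} (B : Finset (Fin N)) : (bup B).card = B.card := Finset.card_map _

lemma bup_singleton {N : ℕ} (i : Fin N) : bup ({i} : Finset (Fin N)) = {Fin.castSucc i} :=
  Finset.map_singleton _ _

lemma bup_nonempty {N : ℕ} {B : Finset (Fin N)} (h : B.Nonempty) : (bup B).Nonempty :=
  Finset.Nonempty.map h

lemma mem_pup {N : ℕ} {P : Finset (Finset (Fin N))} {B' : Finset (Fin (N + 1))} :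
    B' ∈ pup P ↔ ∃ B ∈ P, bup B = B' := by simp [pup]

lemma bup_mem_pup {N : ℕ} {P : Finset (Finset (Fin N))} {B : Finset (Fin N)} :
    bup B ∈ pup P ↔ B ∈ P := by
  rw [mem_pup]
  constructor
  · rintro ⟨C, hC, hCB⟩
    rwa [← bup_injective hCB]
  · intro h
    exact ⟨B, h, rfl⟩

lemma not_mem_pup_of_last_mem {N : ℕ} (P : Finset (Finset (Fin N))) (B' : Finset (Fin (N + 1)))
    (h : Fin.last N ∈ B') : B' ∉ pup P := by
  rw [mem_pup]
  rintro ⟨B, _, rfl⟩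
  exact last_not_mem_bup B h

lemma pdown_pup {N : ℕ} (P : Finset (Finset (Fin N))) : pdown (pup P) = P := by
  unfold pdown pup
  rw [Finset.image_image]
  calc P.image (bdown ∘ bup) = P.image id := Finset.image_congr (fun B _ => bdown_bup B)
  _ = P := Finset.image_id

lemma pup_pdown {N : ℕ} {P : Finset (Finset (Fin (N + 1)))}
    (h : ∀ B ∈ P, Fin.last N ∉ B) : pup (pdown P) = P := by
  unfold pdown pup
  rw [Finset.image_image]
  calc P.image (bup ∘ bdown) = P.image id := Finset.image_congr (fun B hB => bup_bdown (h B hB))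
  _ = P := Finset.image_id

lemma singleton_mem_pup {N : ℕ} {P : Finset (Finset (Fin N))} {y : Fin N} :
    ({Fin.castSucc y} : Finset (Fin (N + 1))) ∈ pup P ↔ ({y} : Finset (Fin N)) ∈ P := by
  rw [← bup_singleton, bup_mem_pup]

lemma singleton_last_not_mem_pup {N : ℕ} (P : Finset (Finset (Fin N))) :
    ({Fin.last N} : Finset (Fin (N + 1))) ∉ pup P :=
  not_mem_pup_of_last_mem P _ (Finset.mem_singleton_self _)

/-! ### the two insertion maps -/

def phiS {N : ℕ} (P : Finset (Finset (Fin N))) : Finset (Finset (Fin (N + 1))) :=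
  insert {Fin.last N} (pup P)

def phiP {N : ℕ} (i : Fin N) (P : Finset (Finset (Fin N))) : Finset (Finset (Fin (N + 1))) :=
  insert {Fin.castSucc i, Fin.last N} (pup (P.erase {i}))

lemma pairBlock_card {N : ℕ} (i : Fin N) :
    ({Fin.castSucc i, Fin.last N} : Finset (Fin (N + 1))).card = 2 := by
  rw [Finset.card_insert_of_notMem (by simp [Fin.ne_of_lt (Fin.castSucc_lt_last i)]),
    Finset.card_singleton]

lemma pairBlock_ne_singleton_last {N : ℕ} (i : Fin N) :
    ({Fin.castSucc i, Fin.last N} : Finset (Fin (N + 1))) ≠ {Fin.last N} := by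
  intro h
  have : ({Fin.castSucc i, Fin.last N} : Finset (Fin (N + 1))).card = 1 := by
    rw [h, Finset.card_singleton]
  rw [pairBlock_card] at this
  omega

lemma pairBlock_not_mem_pup {N : ℕ} (i : Fin N) (P : Finset (Finset (Fin N))) :
    ({Fin.castSucc i, Fin.last N} : Finset (Fin (N + 1))) ∉ pup P :=
  not_mem_pup_of_last_mem P _ (by simp)


/-! ### SameBlock transfer -/

lemma sameBlock_phiS {N : ℕ} {P : Finset (Finset (Fin N))} {a b : Fin N} :
    SameBlock (phiS P) a.castSucc b.castSucc ↔ SameBlock P a b := by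
  unfold SameBlock phiS
  constructor
  · rintro ⟨B', hB', haB, hbB⟩
    rcases Finset.mem_insert.mp hB' with rfl | hB'
    · exact absurd (Finset.mem_singleton.mp haB) (Fin.ne_of_lt (Fin.castSucc_lt_last a))
    · obtain ⟨B, hB, rfl⟩ := mem_pup.mp hB'
      exact ⟨B, hB, castSucc_mem_bup.mp haB, castSucc_mem_bup.mp hbB⟩
  · rintro ⟨B, hB, haB, hbB⟩
    exact ⟨bup B, Finset.mem_insert_of_mem (bup_mem_pup.mpr hB),
      castSucc_mem_bup.mpr haB, castSucc_mem_bup.mpr hbB⟩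

lemma sameBlock_phiS_last {N : ℕ} {P : Finset (Finset (Fin N))} {x : Fin (N + 1)} :
    SameBlock (phiS P) x (Fin.last N) ↔ x = Fin.last N := by
  constructor
  · rintro ⟨B', hB', hx, hl⟩
    rcases Finset.mem_insert.mp hB' with rfl | hB'
    · exact Finset.mem_singleton.mp hx
    · obtain ⟨B, _, rfl⟩ := mem_pup.mp hB'
      exact absurd hl (last_not_mem_bup B)
  · rintro rfl
    exact ⟨{Fin.last N}, Finset.mem_insert_self _ _, by simp, by simp⟩

lemma sameBlock_phiP {N : ℕ} {P : Finset (Finset (Fin N))} {i : Fin N}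
    (hP : IsPartition P) (hi : ({i} : Finset (Fin N)) ∈ P) {a b : Fin N} :
    SameBlock (phiP i P) a.castSucc b.castSucc ↔ SameBlock P a b := by
  unfold SameBlock phiP
  constructor
  · rintro ⟨B', hB', haB, hbB⟩
    rcases Finset.mem_insert.mp hB' with rfl | hB'
    · have ha : a = i := by
        rcases Finset.mem_insert.mp haB with h | h
        · exact Fin.castSucc_injective N h
        · exact absurd (Finset.mem_singleton.mp h) (Fin.ne_of_lt (Fin.castSucc_lt_last a))
      have hb : b = i := by
        rcases Finset.mem_insert.mp hbB with h | h
        · exact Fin.castSucc_injective N h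
        · exact absurd (Finset.mem_singleton.mp h) (Fin.ne_of_lt (Fin.castSucc_lt_last b))
      rw [ha, hb]
      exact ⟨{i}, hi, by simp, by simp⟩
    · obtain ⟨B, hB, rfl⟩ := mem_pup.mp hB'
      exact ⟨B, Finset.mem_of_mem_erase hB, castSucc_mem_bup.mp haB, castSucc_mem_bup.mp hbB⟩
  · rintro ⟨B, hB, haB, hbB⟩
    by_cases hBi : B = {i}
    · subst hBi
      have ha : a = i := Finset.mem_singleton.mp haB
      have hb : b = i := Finset.mem_singleton.mp hbB
      rw [ha, hb]
      exact ⟨{Fin.castSucc i, Fin.last N}, Finset.mem_insert_self _ _, by simp, by simp⟩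
    · exact ⟨bup B, Finset.mem_insert_of_mem (bup_mem_pup.mpr (Finset.mem_erase.mpr ⟨hBi, hB⟩)),
        castSucc_mem_bup.mpr haB, castSucc_mem_bup.mpr hbB⟩

lemma sameBlock_phiP_last {N : ℕ} {P : Finset (Finset (Fin N))} {i : Fin N} {x : Fin (N + 1)} :
    SameBlock (phiP i P) x (Fin.last N) ↔ (x = Fin.castSucc i ∨ x = Fin.last N) := by
  constructor
  · rintro ⟨B', hB', hx, hl⟩
    rcases Finset.mem_insert.mp hB' with rfl | hB'
    · rcases Finset.mem_insert.mp hx with h | h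
      · exact Or.inl h
      · exact Or.inr (Finset.mem_singleton.mp h)
    · obtain ⟨B, _, rfl⟩ := mem_pup.mp hB'
      exact absurd hl (last_not_mem_bup B)
  · intro h
    refine ⟨{Fin.castSucc i, Fin.last N}, Finset.mem_insert_self _ _, ?_, by simp⟩
    rcases h with rfl | rfl
    · simp
    · simp

/-! ### IsPartition transfer -/

lemma isPartition_phiS {N : ℕ} {P : Finset (Finset (Fin N))} (hP : IsPartition P) :
    IsPartition (phiS P) := by
  obtain ⟨hne, hcov, huniq⟩ := hP
  refine ⟨?_, ?_, ?_⟩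
  · intro B' hB'
    rcases Finset.mem_insert.mp hB' with rfl | hB'
    · exact ⟨_, Finset.mem_singleton_self _⟩
    · obtain ⟨B, hB, rfl⟩ := mem_pup.mp hB'
      exact bup_nonempty (hne B hB)
  · intro x
    cases x using Fin.lastCases with
    | last => exact ⟨{Fin.last N}, Finset.mem_insert_self _ _, Finset.mem_singleton_self _⟩
    | cast y =>
        obtain ⟨B, hB, hyB⟩ := hcov y
        exact ⟨bup B, Finset.mem_insert_of_mem (bup_mem_pup.mpr hB), castSucc_mem_bup.mpr hyB⟩
  · intro B' hB' C' hC' x hxB hxC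
    rcases Finset.mem_insert.mp hB' with rfl | hB' <;> rcases Finset.mem_insert.mp hC' with rfl | hC'
    · rfl
    · obtain ⟨C, hC, rfl⟩ := mem_pup.mp hC'
      exact absurd ((Finset.mem_singleton.mp hxB) ▸ hxC) (last_not_mem_bup C)
    · obtain ⟨B, hB, rfl⟩ := mem_pup.mp hB'
      exact absurd ((Finset.mem_singleton.mp hxC) ▸ hxB) (last_not_mem_bup B)
    · obtain ⟨B, hB, rfl⟩ := mem_pup.mp hB'
      obtain ⟨C, hC, rfl⟩ := mem_pup.mp hC'
      obtain ⟨y, hyB, rfl⟩ := mem_bup.mp hxB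
      rw [huniq B hB C hC y hyB (castSucc_mem_bup.mp hxC)]

lemma isPartition_phiP {N : ℕ} {P : Finset (Finset (Fin N))} {i : Fin N} (hP : IsPartition P)
    (hi : ({i} : Finset (Fin N)) ∈ P) : IsPartition (phiP i P) := by
  obtain ⟨hne, hcov, huniq⟩ := hP
  have hblocki : ∀ B ∈ P, i ∈ B → B = {i} := fun B hB hiB =>
    huniq B hB {i} hi i hiB (Finset.mem_singleton_self i)
  refine ⟨?_, ?_, ?_⟩
  · intro B' hB'
    rcases Finset.mem_insert.mp hB' with rfl | hB'
    · exact ⟨Fin.last N, by simp⟩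
    · obtain ⟨B, hB, rfl⟩ := mem_pup.mp hB'
      exact bup_nonempty (hne B (Finset.mem_of_mem_erase hB))
  · intro x
    cases x using Fin.lastCases with
    | last => exact ⟨_, Finset.mem_insert_self _ _, by simp⟩
    | cast y =>
        by_cases hyi : y = i
        · subst hyi
          exact ⟨_, Finset.mem_insert_self _ _, by simp⟩
        · obtain ⟨B, hB, hyB⟩ := hcov y
          have hBne : B ≠ {i} := by
            rintro rfl
            exact hyi (Finset.mem_singleton.mp hyB)
          exact ⟨bup B,
            Finset.mem_insert_of_mem (bup_mem_pup.mpr (Finset.mem_erase.mpr ⟨hBne, hB⟩)),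
            castSucc_mem_bup.mpr hyB⟩
  · intro B' hB' C' hC' x hxB hxC
    rcases Finset.mem_insert.mp hB' with rfl | hB' <;> rcases Finset.mem_insert.mp hC' with rfl | hC'
    · rfl
    · obtain ⟨C, hC, rfl⟩ := mem_pup.mp hC'
      exfalso
      rcases Finset.mem_insert.mp hxB with rfl | hxB2
      · have hiC : i ∈ C := castSucc_mem_bup.mp hxC
        exact (Finset.mem_erase.mp hC).1 (hblocki C (Finset.mem_of_mem_erase hC) hiC)
      · rw [Finset.mem_singleton] at hxB2
        subst hxB2
        exact last_not_mem_bup C hxC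
    · obtain ⟨B, hB, rfl⟩ := mem_pup.mp hB'
      exfalso
      rcases Finset.mem_insert.mp hxC with rfl | hxC2
      · have hiB : i ∈ B := castSucc_mem_bup.mp hxB
        exact (Finset.mem_erase.mp hB).1 (hblocki B (Finset.mem_of_mem_erase hB) hiB)
      · rw [Finset.mem_singleton] at hxC2
        subst hxC2
        exact last_not_mem_bup B hxB
    · obtain ⟨B, hB, rfl⟩ := mem_pup.mp hB'
      obtain ⟨C, hC, rfl⟩ := mem_pup.mp hC'
      obtain ⟨y, hyB, rfl⟩ := mem_bup.mp hxB
      rw [huniq B (Finset.mem_of_mem_erase hB) C (Finset.mem_of_mem_erase hC) y hyB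
        (castSucc_mem_bup.mp hxC)]

/-! ### Inhom transfer -/

lemma inhom_phiS {N : ℕ} {L L' : List ℕ}
    (h1 : ∀ i < N, blockIdx L' i = blockIdx L i)
    {P : Finset (Finset (Fin N))} (hI : Inhom L P) : Inhom L' (phiS P) := by
  intro B' hB' x hx y hy hxy
  rcases Finset.mem_insert.mp hB' with rfl | hB'
  · rw [Finset.mem_singleton] at hx hy
    exact absurd (hx.trans hy.symm) hxy
  · obtain ⟨B, hB, rfl⟩ := mem_pup.mp hB'
    obtain ⟨x0, hx0, rfl⟩ := mem_bup.mp hx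
    obtain ⟨y0, hy0, rfl⟩ := mem_bup.mp hy
    have hne : x0 ≠ y0 := fun h => hxy (by rw [h])
    have := hI B hB x0 hx0 y0 hy0 hne
    rwa [Fin.coe_castSucc, Fin.coe_castSucc, h1 _ x0.isLt, h1 _ y0.isLt]

lemma inhom_phiP {N c : ℕ} {L L' : List ℕ}
    (h1 : ∀ i < N, blockIdx L' i = blockIdx L i)
    (h3 : ∀ i < N, (blockIdx L' i = blockIdx L' N ↔ c ≤ i))
    {P : Finset (Finset (Fin N))} {i : Fin N} (hic : (i : ℕ) < c)
    (hI : Inhom L P) : Inhom L' (phiP i P) := by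
  have hkey : blockIdx L' (i : ℕ) ≠ blockIdx L' N := by
    intro h
    have := (h3 (i : ℕ) i.isLt).mp h
    omega
  intro B' hB' x hx y hy hxy
  rcases Finset.mem_insert.mp hB' with rfl | hB'
  · have hval : ∀ z : Fin (N + 1), z ∈ ({Fin.castSucc i, Fin.last N} : Finset (Fin (N + 1))) →
        (z : ℕ) = (i : ℕ) ∨ (z : ℕ) = N := by
      intro z hz
      rcases Finset.mem_insert.mp hz with rfl | hz
      · exact Or.inl (Fin.coe_castSucc i)
      · rw [Finset.mem_singleton] at hz
        subst hz
        exact Or.inr (Fin.val_last N)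
    rcases hval x hx with hxv | hxv <;> rcases hval y hy with hyv | hyv
    · exact absurd (Fin.ext (hxv.trans hyv.symm)) hxy
    · rw [hxv, hyv]; exact hkey
    · rw [hxv, hyv]; exact hkey.symm
    · exact absurd (Fin.ext (hxv.trans hyv.symm)) hxy
  · obtain ⟨B, hB, rfl⟩ := mem_pup.mp hB'
    obtain ⟨x0, hx0, rfl⟩ := mem_bup.mp hx
    obtain ⟨y0, hy0, rfl⟩ := mem_bup.mp hy
    have hne : x0 ≠ y0 := fun h => hxy (by rw [h])
    have := hI B (Finset.mem_of_mem_erase hB) x0 hx0 y0 hy0 hne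
    rwa [Fin.coe_castSucc, Fin.coe_castSucc, h1 _ x0.isLt, h1 _ y0.isLt]

/-! ### block size transfer -/

lemma card2_phiS {N : ℕ} {P : Finset (Finset (Fin N))} (h2 : ∀ B ∈ P, B.card ≤ 2) :
    ∀ B' ∈ phiS P, B'.card ≤ 2 := by
  intro B' hB'
  rcases Finset.mem_insert.mp hB' with rfl | hB'
  · simp
  · obtain ⟨B, hB, rfl⟩ := mem_pup.mp hB'
    rw [bup_card]
    exact h2 B hB

lemma card2_phiP {N : ℕ} {P : Finset (Finset (Fin N))} {i : Fin N}
    (h2 : ∀ B ∈ P, B.card ≤ 2) : ∀ B' ∈ phiP i P, B'.card ≤ 2 := by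
  intro B' hB'
  rcases Finset.mem_insert.mp hB' with rfl | hB'
  · rw [pairBlock_card]
  · obtain ⟨B, hB, rfl⟩ := mem_pup.mp hB'
    rw [bup_card]
    exact h2 B (Finset.mem_of_mem_erase hB)

/-! ### Pi2 membership of the images -/

lemma mem_Pi2 {N : ℕ} {L : List ℕ} {P : Finset (Finset (Fin N))} :
    P ∈ Pi2 N L ↔ IsPartition P ∧ Inhom L P ∧ ∀ B ∈ P, B.card ≤ 2 := by
  simp [Pi2]

lemma phiS_mem_Pi2 {N : ℕ} {L L' : List ℕ}
    (h1 : ∀ i < N, blockIdx L' i = blockIdx L i)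
    {P : Finset (Finset (Fin N))} (hP : P ∈ Pi2 N L) : phiS P ∈ Pi2 (N + 1) L' := by
  obtain ⟨hp, hI, h2⟩ := mem_Pi2.mp hP
  exact mem_Pi2.mpr ⟨isPartition_phiS hp, inhom_phiS h1 hI, card2_phiS h2⟩

lemma phiP_mem_Pi2 {N c : ℕ} {L L' : List ℕ}
    (h1 : ∀ i < N, blockIdx L' i = blockIdx L i)
    (h3 : ∀ i < N, (blockIdx L' i = blockIdx L' N ↔ c ≤ i))
    {P : Finset (Finset (Fin N))} {i : Fin N} (hi : ({i} : Finset (Fin N)) ∈ P)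
    (hic : (i : ℕ) < c) (hP : P ∈ Pi2 N L) : phiP i P ∈ Pi2 (N + 1) L' := by
  obtain ⟨hp, hI, h2⟩ := mem_Pi2.mp hP
  exact mem_Pi2.mpr ⟨isPartition_phiP hp hi, inhom_phiP h1 h3 hic hI, card2_phiP h2⟩

/-! ### injectivity -/

lemma phiS_inj {N : ℕ} {P P2 : Finset (Finset (Fin N))} (h : phiS P = phiS P2) : P = P2 := by
  have h2 : pup P = pup P2 := by
    have e1 : (phiS P).erase {Fin.last N} = pup P :=
      Finset.erase_insert (singleton_last_not_mem_pup P)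
    have e2 : (phiS P2).erase {Fin.last N} = pup P2 :=
      Finset.erase_insert (singleton_last_not_mem_pup P2)
    rw [← e1, ← e2, h]
  rw [← pdown_pup P, h2, pdown_pup]

lemma phiP_inj {N : ℕ} {P P2 : Finset (Finset (Fin N))} {i i2 : Fin N}
    (hi : ({i} : Finset (Fin N)) ∈ P) (hi2 : ({i2} : Finset (Fin N)) ∈ P2)
    (h : phiP i P = phiP i2 P2) : i = i2 ∧ P = P2 := by
  have hpair : ({Fin.castSucc i, Fin.last N} : Finset (Fin (N + 1)))
      = {Fin.castSucc i2, Fin.last N} := by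
    have hmem : ({Fin.castSucc i, Fin.last N} : Finset (Fin (N + 1))) ∈ phiP i2 P2 := by
      rw [← h]
      exact Finset.mem_insert_self _ _
    rcases Finset.mem_insert.mp hmem with he | he
    · exact he
    · exact absurd he (not_mem_pup_of_last_mem _ _ (by simp))
  have hii : i = i2 := by
    have : Fin.castSucc i ∈ ({Fin.castSucc i2, Fin.last N} : Finset (Fin (N + 1))) := by
      rw [← hpair]
      exact Finset.mem_insert_self _ _
    rcases Finset.mem_insert.mp this with he | he
    · exact Fin.castSucc_injective N he
    · exact absurd (Finset.mem_singleton.mp he)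
        (Fin.ne_of_lt (Fin.castSucc_lt_last i))
  subst hii
  refine ⟨rfl, ?_⟩
  have herase : P.erase {i} = P2.erase {i} := by
    have e1 : (phiP i P).erase {Fin.castSucc i, Fin.last N} = pup (P.erase {i}) :=
      Finset.erase_insert (pairBlock_not_mem_pup i _)
    have e2 : (phiP i P2).erase {Fin.castSucc i, Fin.last N} = pup (P2.erase {i}) :=
      Finset.erase_insert (pairBlock_not_mem_pup i _)
    have : pup (P.erase {i}) = pup (P2.erase {i}) := by
      rw [← e1, ← e2, h, hpair]
    rw [← pdown_pup (P.erase {i}), this, pdown_pup]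
  rw [← Finset.insert_erase hi, herase, Finset.insert_erase hi2]


/-! ### block of an element, surjectivity of the insertion maps -/

def blockOf {n : ℕ} (P : Finset (Finset (Fin n))) (x : Fin n) : Finset (Fin n) :=
  if h : ∃ B ∈ P, x ∈ B then h.choose else ∅

lemma blockOf_mem {n : ℕ} {P : Finset (Finset (Fin n))} {x : Fin n} (h : ∃ B ∈ P, x ∈ B) :
    blockOf P x ∈ P ∧ x ∈ blockOf P x := by
  unfold blockOf
  rw [dif_pos h]
  exact ⟨h.choose_spec.1, h.choose_spec.2⟩

lemma pdown_part_aux {N : ℕ} {L L' : List ℕ}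
    (h1 : ∀ i < N, blockIdx L' i = blockIdx L i)
    {P' : Finset (Finset (Fin (N + 1)))} (hpart : IsPartition P') (hinh : Inhom L' P')
    (h2 : ∀ B ∈ P', B.card ≤ 2) {Q : Finset (Finset (Fin (N + 1)))}
    (hQ : Q ⊆ P') (hnolast : ∀ B ∈ Q, Fin.last N ∉ B) :
    (∀ B ∈ pdown Q, B.Nonempty) ∧ (∀ B ∈ pdown Q, ∀ C ∈ pdown Q, ∀ y : Fin N,
        y ∈ B → y ∈ C → B = C) ∧ Inhom L (pdown Q) ∧ ∀ B ∈ pdown Q, B.card ≤ 2 := by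
  refine ⟨?_, ?_, ?_, ?_⟩
  · intro B hB
    obtain ⟨B', hB', rfl⟩ := Finset.mem_image.mp hB
    obtain ⟨x, hx⟩ := hpart.1 B' (hQ hB')
    have hxl : x ≠ Fin.last N := by
      rintro rfl
      exact hnolast B' hB' hx
    obtain ⟨y, rfl⟩ := Fin.exists_castSucc_eq.mpr hxl
    exact ⟨y, mem_bdown.mpr hx⟩
  · intro B hB C hC y hyB hyC
    obtain ⟨B', hB', rfl⟩ := Finset.mem_image.mp hB
    obtain ⟨C', hC', rfl⟩ := Finset.mem_image.mp hC
    rw [hpart.2.2 B' (hQ hB') C' (hQ hC') y.castSucc (mem_bdown.mp hyB) (mem_bdown.mp hyC)]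
  · intro B hB x hx y hy hxy
    obtain ⟨B', hB', rfl⟩ := Finset.mem_image.mp hB
    have := hinh B' (hQ hB') x.castSucc (mem_bdown.mp hx) y.castSucc (mem_bdown.mp hy)
      (fun h => hxy (Fin.castSucc_injective N h))
    rwa [Fin.coe_castSucc, Fin.coe_castSucc, h1 _ x.isLt, h1 _ y.isLt] at this
  · intro B hB
    obtain ⟨B', hB', rfl⟩ := Finset.mem_image.mp hB
    calc (bdown B').card ≤ B'.card := by
          apply Finset.card_le_card_of_injOn (fun y => y.castSucc)
            (fun y hy => mem_bdown.mp hy)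
          exact fun y1 _ y2 _ h => Fin.castSucc_injective N h
    _ ≤ 2 := h2 B' (hQ hB')

lemma phiS_surj {N : ℕ} {L L' : List ℕ}
    (h1 : ∀ i < N, blockIdx L' i = blockIdx L i)
    {P' : Finset (Finset (Fin (N + 1)))} (hP' : P' ∈ Pi2 (N + 1) L')
    (hlast : ({Fin.last N} : Finset (Fin (N + 1))) ∈ P') :
    ∃ P ∈ Pi2 N L, phiS P = P' := by
  obtain ⟨hpart, hinh, h2⟩ := mem_Pi2.mp hP'
  have hnolast : ∀ B ∈ P'.erase {Fin.last N}, Fin.last N ∉ B := by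
    intro B hB hlB
    have hBP := Finset.mem_of_mem_erase hB
    have := hpart.2.2 B hBP {Fin.last N} hlast (Fin.last N) hlB (Finset.mem_singleton_self _)
    exact (Finset.mem_erase.mp hB).1 this
  obtain ⟨hne, huniq, hI, hcards⟩ := pdown_part_aux h1 hpart hinh h2
    (Finset.erase_subset _ _) hnolast
  refine ⟨pdown (P'.erase {Fin.last N}), ?_, ?_⟩
  · refine mem_Pi2.mpr ⟨⟨hne, ?_, huniq⟩, hI, hcards⟩
    intro y
    obtain ⟨B', hB', hyB⟩ := hpart.2.1 y.castSucc
    have hBne : B' ≠ {Fin.last N} := by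
      rintro rfl
      exact absurd (Finset.mem_singleton.mp hyB) (Fin.ne_of_lt (Fin.castSucc_lt_last y))
    exact ⟨bdown B', Finset.mem_image_of_mem _ (Finset.mem_erase.mpr ⟨hBne, hB'⟩),
      mem_bdown.mpr hyB⟩
  · unfold phiS
    rw [pup_pdown hnolast, Finset.insert_erase hlast]

lemma phiP_surj {N c : ℕ} {L L' : List ℕ}
    (h1 : ∀ i < N, blockIdx L' i = blockIdx L i)
    (h3 : ∀ i < N, (blockIdx L' i = blockIdx L' N ↔ c ≤ i))
    {P' : Finset (Finset (Fin (N + 1)))} (hP' : P' ∈ Pi2 (N + 1) L')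
    (hlast : ({Fin.last N} : Finset (Fin (N + 1))) ∉ P') :
    ∃ P i, P ∈ Pi2 N L ∧ ({i} : Finset (Fin N)) ∈ P ∧ (i : ℕ) < c ∧ phiP i P = P' := by
  obtain ⟨hpart, hinh, h2⟩ := mem_Pi2.mp hP'
  -- the block of `last`
  have hex : ∃ B ∈ P', Fin.last N ∈ B := hpart.2.1 (Fin.last N)
  obtain ⟨hB0mem, hlB0⟩ := blockOf_mem hex
  set B0 := blockOf P' (Fin.last N) with hB0def
  have hB0ne : B0 ≠ {Fin.last N} := by
    intro h
    rw [h] at hB0mem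
    exact hlast hB0mem
  have hw : ∃ w ∈ B0, w ≠ Fin.last N := by
    by_contra hcon
    push_neg at hcon
    apply hB0ne
    apply Finset.Subset.antisymm
    · intro z hz
      rw [Finset.mem_singleton]
      exact hcon z hz
    · intro z hz
      rw [Finset.mem_singleton] at hz
      subst hz
      exact hlB0
  obtain ⟨w, hwB, hwne⟩ := hw
  obtain ⟨i0, rfl⟩ := Fin.exists_castSucc_eq.mpr hwne
  have hB0 : B0 = {Fin.castSucc i0, Fin.last N} := by
    have hsub : ({Fin.castSucc i0, Fin.last N} : Finset (Fin (N + 1))) ⊆ B0 := by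
      intro z hz
      rcases Finset.mem_insert.mp hz with rfl | hz
      · exact hwB
      · rw [Finset.mem_singleton] at hz
        subst hz
        exact hlB0
    have hle : B0.card ≤ ({Fin.castSucc i0, Fin.last N} : Finset (Fin (N + 1))).card := by
      rw [pairBlock_card]
      exact h2 B0 hB0mem
    exact (Finset.eq_of_subset_of_card_le hsub hle).symm
  -- inhomogeneity gives the position bound
  have hic : (i0 : ℕ) < c := by
    have hne : Fin.castSucc i0 ≠ Fin.last N := Fin.ne_of_lt (Fin.castSucc_lt_last i0)
    have := hinh B0 hB0mem (Fin.castSucc i0) (by rw [hB0]; simp) (Fin.last N)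
      (by rw [hB0]; simp) hne
    rw [Fin.coe_castSucc, Fin.val_last] at this
    by_contra hcon
    push_neg at hcon
    exact this ((h3 (i0 : ℕ) i0.isLt).mpr hcon)
  -- the blocks other than B0 avoid last
  have hnolast : ∀ B ∈ P'.erase B0, Fin.last N ∉ B := by
    intro B hB hlB
    have := hpart.2.2 B (Finset.mem_of_mem_erase hB) B0 hB0mem (Fin.last N) hlB hlB0
    exact (Finset.mem_erase.mp hB).1 this
  obtain ⟨hne, huniq, hI, hcards⟩ := pdown_part_aux h1 hpart hinh h2
    (Finset.erase_subset _ _) hnolast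
  set X := pdown (P'.erase B0) with hXdef
  have hi0X : ({i0} : Finset (Fin N)) ∉ X := by
    intro hmem
    obtain ⟨B', hB', hBd⟩ := Finset.mem_image.mp hmem
    have : Fin.castSucc i0 ∈ B' := by
      rw [← mem_bdown, hBd]
      exact Finset.mem_singleton_self _
    have := hpart.2.2 B' (Finset.mem_of_mem_erase hB') B0 hB0mem (Fin.castSucc i0) this
      (by rw [hB0]; simp)
    exact (Finset.mem_erase.mp hB').1 this
  refine ⟨insert {i0} X, i0, ?_, Finset.mem_insert_self _ _, hic, ?_⟩
  · -- membership in Pi2 N L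
    refine mem_Pi2.mpr ⟨⟨?_, ?_, ?_⟩, ?_, ?_⟩
    · intro B hB
      rcases Finset.mem_insert.mp hB with rfl | hB
      · exact ⟨i0, Finset.mem_singleton_self _⟩
      · exact hne B hB
    · intro y
      by_cases hyi : y = i0
      · subst hyi
        exact ⟨{y}, Finset.mem_insert_self _ _, Finset.mem_singleton_self _⟩
      · obtain ⟨B', hB', hyB⟩ := hpart.2.1 y.castSucc
        have hBne : B' ≠ B0 := by
          rintro rfl
          rw [hB0] at hyB
          rcases Finset.mem_insert.mp hyB with h | h
          · exact hyi (Fin.castSucc_injective N h)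
          · exact absurd (Finset.mem_singleton.mp h)
              (Fin.ne_of_lt (Fin.castSucc_lt_last y))
        exact ⟨bdown B', Finset.mem_insert_of_mem
          (Finset.mem_image_of_mem _ (Finset.mem_erase.mpr ⟨hBne, hB'⟩)), mem_bdown.mpr hyB⟩
    · intro B hB C hC y hyB hyC
      rcases Finset.mem_insert.mp hB with rfl | hBX
      · rcases Finset.mem_insert.mp hC with rfl | hCX
        · rfl
        · exfalso
          rw [Finset.mem_singleton] at hyB
          subst hyB
          rw [hXdef] at hCX
          obtain ⟨C', hC', rfl⟩ := Finset.mem_image.mp hCX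
          have hyc : y.castSucc ∈ C' := mem_bdown.mp hyC
          have := hpart.2.2 C' (Finset.mem_of_mem_erase hC') B0 hB0mem y.castSucc hyc
            (by rw [hB0]; simp)
          exact (Finset.mem_erase.mp hC').1 this
      · rcases Finset.mem_insert.mp hC with rfl | hCX
        · exfalso
          rw [Finset.mem_singleton] at hyC
          subst hyC
          rw [hXdef] at hBX
          obtain ⟨B', hB', rfl⟩ := Finset.mem_image.mp hBX
          have hyb : y.castSucc ∈ B' := mem_bdown.mp hyB
          have := hpart.2.2 B' (Finset.mem_of_mem_erase hB') B0 hB0mem y.castSucc hyb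
            (by rw [hB0]; simp)
          exact (Finset.mem_erase.mp hB').1 this
        · exact huniq B hBX C hCX y hyB hyC
    · intro B hB x hx y hy hxy
      rcases Finset.mem_insert.mp hB with rfl | hB
      · rw [Finset.mem_singleton] at hx hy
        exact absurd (hx.trans hy.symm) hxy
      · exact hI B hB x hx y hy hxy
    · intro B hB
      rcases Finset.mem_insert.mp hB with rfl | hB
      · simp
      · exact hcards B hB
  · -- phiP i0 (insert {i0} X) = P'
    unfold phiP
    rw [Finset.erase_insert hi0X, pup_pdown hnolast, ← hB0, Finset.insert_erase hB0mem]


/-! ### statistics under the insertion maps -/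

lemma castSuccEmb_apply {N : ℕ} (y : Fin N) : Fin.castSuccEmb y = y.castSucc := rfl

lemma sd_eq {n : ℕ} (P : Finset (Finset (Fin n))) : sd P = ∑ i ∈ sings P, depth P i := rfl

lemma bdown_singleton_cast {N : ℕ} (y : Fin N) :
    bdown ({Fin.castSucc y} : Finset (Fin (N + 1))) = {y} := by
  ext z
  rw [mem_bdown, Finset.mem_singleton, Finset.mem_singleton]
  exact ⟨fun h => Fin.castSucc_injective N h, fun h => by rw [h]⟩

lemma sings_phiS {N : ℕ} (P : Finset (Finset (Fin N))) :
    sings (phiS P) = insert (Fin.last N) (bup (sings P)) := by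
  ext x
  simp only [sings, Finset.mem_filter, Finset.mem_univ, true_and, Finset.mem_insert]
  constructor
  · intro h
    rcases Finset.mem_insert.mp h with he | he
    · exact Or.inl (Finset.singleton_inj.mp he)
    · right
      obtain ⟨B, hB, hBe⟩ := mem_pup.mp he
      have hx : x ∈ bup B := hBe ▸ Finset.mem_singleton_self x
      obtain ⟨y, hyB, rfl⟩ := mem_bup.mp hx
      have hBy : B = {y} := by
        rw [← bdown_bup B, hBe, bdown_singleton_cast]
      rw [hBy] at hB
      apply castSucc_mem_bup.mpr
      simp only [sings, Finset.mem_filter, Finset.mem_univ, true_and]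
      exact hB
  · intro h
    rcases h with rfl | he
    · exact Finset.mem_insert_self _ _
    · obtain ⟨y, hy, rfl⟩ := mem_bup.mp he
      simp only [sings, Finset.mem_filter, Finset.mem_univ, true_and] at hy
      exact Finset.mem_insert_of_mem (by rw [← bup_singleton]; exact bup_mem_pup.mpr hy)

lemma sings_phiP {N : ℕ} (P : Finset (Finset (Fin N))) (i : Fin N) :
    sings (phiP i P) = bup ((sings P).erase i) := by
  ext x
  simp only [sings, Finset.mem_filter, Finset.mem_univ, true_and]
  constructor
  · intro h
    rcases Finset.mem_insert.mp h with he | he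
    · exfalso
      have := congrArg Finset.card he
      rw [Finset.card_singleton, pairBlock_card] at this
      omega
    · obtain ⟨B, hB, hBe⟩ := mem_pup.mp he
      have hx : x ∈ bup B := hBe ▸ Finset.mem_singleton_self x
      obtain ⟨y, hyB, rfl⟩ := mem_bup.mp hx
      have hBy : B = {y} := by
        rw [← bdown_bup B, hBe, bdown_singleton_cast]
      rw [hBy] at hB
      have hyP : ({y} : Finset (Fin N)) ∈ P := Finset.mem_of_mem_erase hB
      have hyne : y ≠ i := by
        intro hyi
        subst hyi
        exact (Finset.mem_erase.mp hB).1 rfl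
      apply castSucc_mem_bup.mpr
      rw [Finset.mem_erase]
      refine ⟨hyne, ?_⟩
      simp only [sings, Finset.mem_filter, Finset.mem_univ, true_and]
      exact hyP
  · intro he
    obtain ⟨y, hy, rfl⟩ := mem_bup.mp he
    rw [Finset.mem_erase] at hy
    obtain ⟨hyne, hy⟩ := hy
    simp only [sings, Finset.mem_filter, Finset.mem_univ, true_and] at hy
    apply Finset.mem_insert_of_mem
    rw [← bup_singleton]
    apply bup_mem_pup.mpr
    rw [Finset.mem_erase]
    exact ⟨fun h => hyne (Finset.singleton_inj.mp h), hy⟩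

lemma filter_bup {N : ℕ} (S : Finset (Fin N)) (p : ℕ → Prop) :
    ((bup S).filter fun x : Fin (N + 1) => p (x : ℕ)) = bup (S.filter fun y : Fin N => p (y : ℕ)) := by
  unfold bup
  rw [Finset.filter_map]
  congr 1

lemma filter_bup_lt {N : ℕ} (S : Finset (Fin N)) (c : ℕ) :
    ((bup S).filter fun x : Fin (N + 1) => (x : ℕ) < c)
      = bup (S.filter fun y : Fin N => (y : ℕ) < c) := by
  ext x
  simp only [Finset.mem_filter, mem_bup]
  constructor
  · rintro ⟨⟨y, hy, rfl⟩, hlt⟩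
    exact ⟨y, ⟨hy, by simpa [Fin.coe_castSucc] using hlt⟩, rfl⟩
  · rintro ⟨y, ⟨hyS, hyc⟩, rfl⟩
    exact ⟨⟨y, hyS, rfl⟩, by simpa [Fin.coe_castSucc] using hyc⟩

lemma filter_bup_ge {N : ℕ} (S : Finset (Fin N)) (c : ℕ) :
    ((bup S).filter fun x : Fin (N + 1) => c ≤ (x : ℕ))
      = bup (S.filter fun y : Fin N => c ≤ (y : ℕ)) := by
  ext x
  simp only [Finset.mem_filter, mem_bup]
  constructor
  · rintro ⟨⟨y, hy, rfl⟩, hlt⟩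
    exact ⟨y, ⟨hy, by simpa [Fin.coe_castSucc] using hlt⟩, rfl⟩
  · rintro ⟨y, ⟨hyS, hyc⟩, rfl⟩
    exact ⟨⟨y, hyS, rfl⟩, by simpa [Fin.coe_castSucc] using hyc⟩

/-! ### depth transfer -/

lemma depth_pup {N : ℕ} (Q : Finset (Finset (Fin N))) (j : Fin N) :
    ((pup Q).filter fun B' => ∃ a ∈ B', ∃ b ∈ B', a < Fin.castSucc j ∧ Fin.castSucc j < b).card
      = depth Q j := by
  unfold depth pup
  rw [Finset.filter_image, Finset.card_image_of_injective _ bup_injective]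
  congr 1
  apply Finset.filter_congr
  intro B _
  constructor
  · rintro ⟨a, ha, b, hb, h1, h2⟩
    obtain ⟨a0, ha0, rfl⟩ := mem_bup.mp ha
    obtain ⟨b0, hb0, rfl⟩ := mem_bup.mp hb
    exact ⟨a0, ha0, b0, hb0, Fin.castSucc_lt_castSucc_iff.mp h1,
      Fin.castSucc_lt_castSucc_iff.mp h2⟩
  · rintro ⟨a, ha, b, hb, h1, h2⟩
    exact ⟨a.castSucc, castSucc_mem_bup.mpr ha, b.castSucc, castSucc_mem_bup.mpr hb,
      Fin.castSucc_lt_castSucc_iff.mpr h1, Fin.castSucc_lt_castSucc_iff.mpr h2⟩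

lemma depth_phiS {N : ℕ} (P : Finset (Finset (Fin N))) (j : Fin N) :
    depth (phiS P) j.castSucc = depth P j := by
  unfold depth phiS
  have hno : ¬ (∃ a ∈ ({Fin.last N} : Finset (Fin (N + 1))), ∃ b ∈
      ({Fin.last N} : Finset (Fin (N + 1))), a < Fin.castSucc j ∧ Fin.castSucc j < b) := by
    rintro ⟨a, ha, b, hb, h1, h2⟩
    rw [Finset.mem_singleton] at ha hb
    subst ha; subst hb
    exact absurd (h1.trans h2) (lt_irrefl _)
  rw [Finset.filter_insert, if_neg hno]
  exact depth_pup P j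

lemma depth_phiS_last {N : ℕ} (P : Finset (Finset (Fin N))) :
    depth (phiS P) (Fin.last N) = 0 := by
  unfold depth
  rw [Finset.card_eq_zero, Finset.filter_eq_empty_iff]
  rintro B _ ⟨a, _, b, _, _, h2⟩
  exact absurd h2 (not_lt.mpr (Fin.le_last b))

lemma depth_erase_singleton {N : ℕ} (P : Finset (Finset (Fin N))) (i j : Fin N) :
    depth (P.erase {i}) j = depth P j := by
  unfold depth
  rw [Finset.filter_erase, Finset.erase_eq_of_notMem]
  intro hmem
  obtain ⟨a, ha, b, hb, h1, h2⟩ := (Finset.mem_filter.mp hmem).2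
  rw [Finset.mem_singleton] at ha hb
  subst ha; subst hb
  exact absurd (h1.trans h2) (lt_irrefl _)

lemma depth_phiP {N : ℕ} (P : Finset (Finset (Fin N))) (i j : Fin N) :
    depth (phiP i P) j.castSucc = depth P j + (if i < j then 1 else 0) := by
  unfold phiP
  have hpair : (∃ a ∈ ({Fin.castSucc i, Fin.last N} : Finset (Fin (N + 1))), ∃ b ∈
      ({Fin.castSucc i, Fin.last N} : Finset (Fin (N + 1))),
      a < Fin.castSucc j ∧ Fin.castSucc j < b) ↔ i < j := by
    constructor
    · rintro ⟨a, ha, b, hb, h1, h2⟩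
      have hac : a = Fin.castSucc i := by
        rcases Finset.mem_insert.mp ha with h | h
        · exact h
        · exfalso
          rw [Finset.mem_singleton] at h
          subst h
          exact absurd (h1.trans (Fin.castSucc_lt_last j)) (lt_irrefl _)
      subst hac
      exact Fin.castSucc_lt_castSucc_iff.mp h1
    · intro hij
      exact ⟨Fin.castSucc i, Finset.mem_insert_self _ _,
        Fin.last N, Finset.mem_insert_of_mem (Finset.mem_singleton_self _),
        Fin.castSucc_lt_castSucc_iff.mpr hij, Fin.castSucc_lt_last j⟩
  show (Finset.filter _ (insert _ _)).card = _
  rw [Finset.filter_insert]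
  by_cases hij : i < j
  · rw [if_pos (hpair.mpr hij), if_pos hij,
      Finset.card_insert_of_notMem (fun h => (pairBlock_not_mem_pup i _) (Finset.mem_of_mem_filter _ h)),
      depth_pup, depth_erase_singleton]
  · rw [if_neg (fun h => hij (hpair.mp h)), if_neg hij, add_zero, depth_pup,
      depth_erase_singleton]

/-! ### sd transfer -/

lemma sd_phiS {N : ℕ} (P : Finset (Finset (Fin N))) : sd (phiS P) = sd P := by
  rw [sd_eq, sd_eq, sings_phiS, Finset.sum_insert (last_not_mem_bup _), depth_phiS_last,
    zero_add]
  unfold bup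
  rw [Finset.sum_map]
  apply Finset.sum_congr rfl
  intro j _
  exact depth_phiS P j

lemma sd_phiP {N : ℕ} (P : Finset (Finset (Fin N))) (i : Fin N)
    (hi : ({i} : Finset (Fin N)) ∈ P) :
    sd (phiP i P) + depth P i = sd P + ((sings P).filter fun j => i < j).card := by
  have hisings : i ∈ sings P := by
    simp only [sings, Finset.mem_filter, Finset.mem_univ, true_and]
    exact hi
  rw [sd_eq, sd_eq, sings_phiP]
  unfold bup
  rw [Finset.sum_map]
  have e : ∀ j ∈ (sings P).erase i,
      depth (phiP i P) (Fin.castSuccEmb j) = depth P j + (if i < j then 1 else 0) :=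
    fun j _ => depth_phiP P i j
  rw [Finset.sum_congr rfl e, Finset.sum_add_distrib]
  have h1 : (∑ j ∈ (sings P).erase i, depth P j) + depth P i = ∑ j ∈ sings P, depth P j :=
    Finset.sum_erase_add _ _ hisings
  have h2 : (∑ j ∈ (sings P).erase i, if i < j then 1 else 0)
      = ((sings P).filter fun j => i < j).card := by
    rw [Finset.sum_erase _ (by simp), Finset.card_filter]
  omega

/-! ### s2count transfer -/

lemma s2_pup {N : ℕ} (Q : Finset (Finset (Fin N))) : s2count (pup Q) = s2count Q := by
  unfold s2count pup
  rw [Finset.filter_image, Finset.card_image_of_injective _ bup_injective]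
  congr 1
  apply Finset.filter_congr
  intro B _
  rw [bup_card]

lemma s2_phiS {N : ℕ} (P : Finset (Finset (Fin N))) : s2count (phiS P) = s2count P := by
  unfold s2count phiS
  rw [Finset.filter_insert, if_neg (by simp)]
  exact s2_pup P

lemma s2_phiP {N : ℕ} (P : Finset (Finset (Fin N))) (i : Fin N)
    (hi : ({i} : Finset (Fin N)) ∈ P) : s2count (phiP i P) = s2count P + 1 := by
  unfold s2count phiP
  rw [Finset.filter_insert, if_pos (pairBlock_card i),
    Finset.card_insert_of_notMem (fun h => (pairBlock_not_mem_pup i _) (Finset.mem_of_mem_filter _ h))]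
  have : s2count (P.erase {i}) = s2count P := by
    unfold s2count
    rw [Finset.filter_erase, Finset.erase_eq_of_notMem]
    intro hmem
    have := (Finset.mem_filter.mp hmem).2
    rw [Finset.card_singleton] at this
    omega
  have h2 := s2_pup (P.erase {i})
  unfold s2count at this h2
  omega

/-! ### the rank sum identity -/

lemma rank_sum (q : ℝ) {N : ℕ} (c : ℕ) (S : Finset (Fin N)) :
    (∑ i ∈ S.filter (fun i : Fin N => (i : ℕ) < c), q ^ (S.filter (fun j => i < j)).card)
      = q ^ (S.filter (fun j : Fin N => c ≤ (j : ℕ))).card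
        * qInt q (S.filter (fun i : Fin N => (i : ℕ) < c)).card := by
  induction S using Finset.strongInductionOn with
  | _ S ih =>
    rcases Finset.eq_empty_or_nonempty S with rfl | hSne
    · simp [qInt_zero]
    · have hMS : S.max' hSne ∈ S := S.max'_mem hSne
      set M := S.max' hSne with hM
      set S' := S.erase M with hS'
      have hsub : S' ⊂ S := Finset.erase_ssubset hMS
      have ihS' := ih S' hsub
      have hSins : S = insert M S' := (Finset.insert_erase hMS).symm
      have hMnotS' : M ∉ S' := Finset.notMem_erase M S
      have hcnt : ∀ i ∈ S', (S.filter (fun j => i < j)).card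
          = (S'.filter (fun j => i < j)).card + 1 := by
        intro i hiS'
        have hiM : i < M := by
          have hle := S.le_max' i (Finset.mem_of_mem_erase hiS')
          exact lt_of_le_of_ne hle (Finset.ne_of_mem_erase hiS')
        rw [hSins, Finset.filter_insert, if_pos hiM, Finset.card_insert_of_notMem
          (fun h => hMnotS' (Finset.mem_of_mem_filter _ h))]
      by_cases hcM : c ≤ (M : ℕ)
      · have hbelow : S.filter (fun i : Fin N => (i : ℕ) < c)
            = S'.filter (fun i : Fin N => (i : ℕ) < c) := by
          rw [hSins, Finset.filter_insert, if_neg (by omega)]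
        have habove : S.filter (fun j : Fin N => c ≤ (j : ℕ))
            = insert M (S'.filter (fun j : Fin N => c ≤ (j : ℕ))) := by
          rw [hSins, Finset.filter_insert, if_pos hcM]
        rw [hbelow, habove, Finset.card_insert_of_notMem
          (fun h => hMnotS' (Finset.mem_of_mem_filter _ h))]
        have hL : (∑ i ∈ S'.filter (fun i : Fin N => (i : ℕ) < c),
            q ^ (S.filter (fun j => i < j)).card)
            = q * ∑ i ∈ S'.filter (fun i : Fin N => (i : ℕ) < c),
                q ^ (S'.filter (fun j => i < j)).card := by
          rw [Finset.mul_sum]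
          apply Finset.sum_congr rfl
          intro i hi
          rw [hcnt i (Finset.mem_of_mem_filter _ hi), pow_succ]
          ring
        rw [hL, ihS', pow_succ]
        ring
      · push_neg at hcM
        have hlible : ∀ j ∈ S, (j : ℕ) ≤ (M : ℕ) := fun j hj => S.le_max' j hj
        have habove' : S'.filter (fun j : Fin N => c ≤ (j : ℕ)) = ∅ := by
          rw [Finset.filter_eq_empty_iff]
          intro j hj
          have := hlible j (Finset.mem_of_mem_erase hj)
          omega
        have hbelow' : S'.filter (fun i : Fin N => (i : ℕ) < c) = S' :=
          Finset.filter_true_of_mem (fun i hi => by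
            have := hlible i (Finset.mem_of_mem_erase hi); omega)
        have habove : S.filter (fun j : Fin N => c ≤ (j : ℕ)) = ∅ := by
          rw [Finset.filter_eq_empty_iff]
          intro j hj
          have := hlible j hj
          omega
        have hbelow : S.filter (fun i : Fin N => (i : ℕ) < c) = S :=
          Finset.filter_true_of_mem (fun i hi => by have := hlible i hi; omega)
        rw [habove', hbelow', Finset.card_empty, pow_zero, one_mul] at ihS'
        rw [habove, hbelow, Finset.card_empty, pow_zero, one_mul]
        have hcntM : (S.filter (fun j => M < j)).card = 0 := by
          rw [Finset.card_eq_zero, Finset.filter_eq_empty_iff]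
          intro j hj
          exact not_lt.mpr (S.le_max' j hj)
        have hL : (∑ i ∈ S', q ^ (S.filter (fun j => i < j)).card)
            = q * ∑ i ∈ S', q ^ (S'.filter (fun j => i < j)).card := by
          rw [Finset.mul_sum]
          apply Finset.sum_congr rfl
          intro i hi
          rw [hcnt i hi, pow_succ]
          ring
        have hcard : S.card = S'.card + 1 := by
          conv_lhs => rw [hSins]
          rw [Finset.card_insert_of_notMem hMnotS']
        rw [← Finset.add_sum_erase S (fun i => q ^ (S.filter (fun j => i < j)).card) hMS]
        rw [hcntM, pow_zero, hL, ihS', hcard, qInt_succ']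


/-! ### crossing transfer -/

lemma mem_crossQ {n : ℕ} {P : Finset (Finset (Fin n))} {p : Fin n × Fin n × Fin n × Fin n} :
    p ∈ crossQ P ↔ p.1 < p.2.1 ∧ p.2.1 < p.2.2.1 ∧ p.2.2.1 < p.2.2.2 ∧
      SameBlock P p.1 p.2.2.1 ∧ SameBlock P p.2.1 p.2.2.2 := by
  simp [crossQ]

lemma cross_phiS {N : ℕ} (P : Finset (Finset (Fin N))) : cross (phiS P) = cross P := by
  unfold cross
  symm
  apply Finset.card_bij
    (fun p _ => (p.1.castSucc, p.2.1.castSucc, p.2.2.1.castSucc, p.2.2.2.castSucc))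
  · intro p hp
    rw [mem_crossQ] at hp ⊢
    obtain ⟨h1, h2, h3, h4, h5⟩ := hp
    exact ⟨Fin.castSucc_lt_castSucc_iff.mpr h1, Fin.castSucc_lt_castSucc_iff.mpr h2,
      Fin.castSucc_lt_castSucc_iff.mpr h3, sameBlock_phiS.mpr h4, sameBlock_phiS.mpr h5⟩
  · intro p hp p' hp' he
    rcases p with ⟨a, b, c, d⟩
    rcases p' with ⟨a', b', c', d'⟩
    simp only [Prod.mk.injEq] at he ⊢
    obtain ⟨e1, e2, e3, e4⟩ := he
    exact ⟨Fin.castSucc_injective N e1, Fin.castSucc_injective N e2,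
      Fin.castSucc_injective N e3, Fin.castSucc_injective N e4⟩
  · rintro ⟨a', b', c', d'⟩ hp'
    rw [mem_crossQ] at hp'
    obtain ⟨h1, h2, h3, h4, h5⟩ := hp'
    simp only at h1 h2 h3 h4 h5
    have hd : d' ≠ Fin.last N := by
      intro hd
      rw [hd] at h5
      have hb := sameBlock_phiS_last.mp h5
      rw [hb] at h2
      rw [hd] at h3
      exact absurd (h2.trans h3) (lt_irrefl _)
    have hdlt : d' < Fin.last N := lt_of_le_of_ne (Fin.le_last d') hd
    obtain ⟨d, rfl⟩ := Fin.exists_castSucc_eq.mpr hd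
    obtain ⟨c, rfl⟩ := Fin.exists_castSucc_eq.mpr (Fin.ne_of_lt (h3.trans hdlt))
    obtain ⟨b, rfl⟩ := Fin.exists_castSucc_eq.mpr
      (Fin.ne_of_lt ((h2.trans h3).trans hdlt))
    obtain ⟨a, rfl⟩ := Fin.exists_castSucc_eq.mpr
      (Fin.ne_of_lt (((h1.trans h2).trans h3).trans hdlt))
    refine ⟨(a, b, c, d), ?_, rfl⟩
    rw [mem_crossQ]
    exact ⟨Fin.castSucc_lt_castSucc_iff.mp h1, Fin.castSucc_lt_castSucc_iff.mp h2,
      Fin.castSucc_lt_castSucc_iff.mp h3, sameBlock_phiS.mp h4, sameBlock_phiS.mp h5⟩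

lemma depth_pairs {N : ℕ} {P : Finset (Finset (Fin N))} (hP : IsPartition P)
    (h2 : ∀ B ∈ P, B.card ≤ 2) (i : Fin N) :
    (Finset.univ.filter fun pr : Fin N × Fin N =>
        pr.1 < i ∧ i < pr.2 ∧ SameBlock P pr.1 pr.2).card = depth P i := by
  unfold depth
  apply Finset.card_bij (fun pr _ => ({pr.1, pr.2} : Finset (Fin N)))
  · intro pr hpr
    simp only [Finset.mem_filter, Finset.mem_univ, true_and] at hpr
    obtain ⟨ha, hb, hsb⟩ := hpr
    rw [Finset.mem_filter]
    exact ⟨pair_block_mem hP h2 (ne_of_lt (ha.trans hb)) hsb,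
      pr.1, by simp, pr.2, by simp, ha, hb⟩
  · intro pr hpr pr' hpr' he
    simp only [Finset.mem_filter, Finset.mem_univ, true_and] at hpr hpr'
    obtain ⟨ha, hb, -⟩ := hpr
    obtain ⟨ha', hb', -⟩ := hpr'
    have h1 : pr.1 ∈ ({pr'.1, pr'.2} : Finset (Fin N)) := by rw [← he]; simp
    have h2' : pr.2 ∈ ({pr'.1, pr'.2} : Finset (Fin N)) := by rw [← he]; simp
    have e1 : pr.1 = pr'.1 := by
      rcases Finset.mem_insert.mp h1 with h | h
      · exact h
      · rw [Finset.mem_singleton] at h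
        exfalso
        rw [h] at ha
        exact absurd (hb'.trans ha) (lt_irrefl _)
    have e2 : pr.2 = pr'.2 := by
      rcases Finset.mem_insert.mp h2' with h | h
      · exfalso
        rw [h] at hb
        exact absurd (hb.trans ha') (lt_irrefl _)
      · exact Finset.mem_singleton.mp h
    exact Prod.ext e1 e2
  · intro B hB
    rw [Finset.mem_filter] at hB
    obtain ⟨hBP, a, haB, b, hbB, ha, hb⟩ := hB
    refine ⟨(a, b), ?_, ?_⟩
    · simp only [Finset.mem_filter, Finset.mem_univ, true_and]
      exact ⟨ha, hb, B, hBP, haB, hbB⟩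
    · have hsub : ({a, b} : Finset (Fin N)) ⊆ B := by
        intro z hz
        rcases Finset.mem_insert.mp hz with rfl | hz
        · exact haB
        · rw [Finset.mem_singleton] at hz
          subst hz
          exact hbB
      have hcard : B.card ≤ ({a, b} : Finset (Fin N)).card := by
        rw [Finset.card_insert_of_notMem (by simp [Fin.ne_of_lt (ha.trans hb)]),
          Finset.card_singleton]
        exact h2 B hBP
      exact Finset.eq_of_subset_of_card_le hsub hcard

lemma cross_phiP {N : ℕ} {P : Finset (Finset (Fin N))} {i : Fin N} (hP : IsPartition P)
    (h2 : ∀ B ∈ P, B.card ≤ 2) (hi : ({i} : Finset (Fin N)) ∈ P) :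
    cross (phiP i P) = cross P + depth P i := by
  have hA : ((crossQ (phiP i P)).filter fun p => ¬ p.2.2.2 = Fin.last N).card = cross P := by
    unfold cross
    symm
    apply Finset.card_bij
      (fun p _ => (p.1.castSucc, p.2.1.castSucc, p.2.2.1.castSucc, p.2.2.2.castSucc))
    · intro p hp
      rw [mem_crossQ] at hp
      obtain ⟨h1, h2', h3, h4, h5⟩ := hp
      rw [Finset.mem_filter, mem_crossQ]
      refine ⟨⟨Fin.castSucc_lt_castSucc_iff.mpr h1, Fin.castSucc_lt_castSucc_iff.mpr h2',
        Fin.castSucc_lt_castSucc_iff.mpr h3, sameBlock_phiP hP hi |>.mpr h4,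
        sameBlock_phiP hP hi |>.mpr h5⟩, ?_⟩
      exact Fin.ne_of_lt (Fin.castSucc_lt_last _)
    · intro p hp p' hp' he
      rcases p with ⟨a, b, c, d⟩
      rcases p' with ⟨a', b', c', d'⟩
      simp only [Prod.mk.injEq] at he ⊢
      obtain ⟨e1, e2, e3, e4⟩ := he
      exact ⟨Fin.castSucc_injective N e1, Fin.castSucc_injective N e2,
        Fin.castSucc_injective N e3, Fin.castSucc_injective N e4⟩
    · rintro ⟨a', b', c', d'⟩ hp'
      rw [Finset.mem_filter, mem_crossQ] at hp'
      obtain ⟨⟨h1, h2', h3, h4, h5⟩, hd⟩ := hp'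
      simp only at h1 h2' h3 h4 h5 hd
      have hdlt : d' < Fin.last N := lt_of_le_of_ne (Fin.le_last d') hd
      obtain ⟨d, rfl⟩ := Fin.exists_castSucc_eq.mpr hd
      obtain ⟨c, rfl⟩ := Fin.exists_castSucc_eq.mpr (Fin.ne_of_lt (h3.trans hdlt))
      obtain ⟨b, rfl⟩ := Fin.exists_castSucc_eq.mpr
        (Fin.ne_of_lt ((h2'.trans h3).trans hdlt))
      obtain ⟨a, rfl⟩ := Fin.exists_castSucc_eq.mpr
        (Fin.ne_of_lt (((h1.trans h2').trans h3).trans hdlt))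
      refine ⟨(a, b, c, d), ?_, rfl⟩
      rw [mem_crossQ]
      exact ⟨Fin.castSucc_lt_castSucc_iff.mp h1, Fin.castSucc_lt_castSucc_iff.mp h2',
        Fin.castSucc_lt_castSucc_iff.mp h3, (sameBlock_phiP hP hi).mp h4,
        (sameBlock_phiP hP hi).mp h5⟩
  have hB : ((crossQ (phiP i P)).filter fun p => p.2.2.2 = Fin.last N).card = depth P i := by
    rw [← depth_pairs hP h2 i]
    symm
    apply Finset.card_bij
      (fun pr _ => (pr.1.castSucc, i.castSucc, pr.2.castSucc, Fin.last N))
    · intro pr hpr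
      simp only [Finset.mem_filter, Finset.mem_univ, true_and] at hpr
      obtain ⟨ha, hb, hsb⟩ := hpr
      rw [Finset.mem_filter, mem_crossQ]
      exact ⟨⟨Fin.castSucc_lt_castSucc_iff.mpr ha, Fin.castSucc_lt_castSucc_iff.mpr hb,
        Fin.castSucc_lt_last _, (sameBlock_phiP hP hi).mpr hsb,
        sameBlock_phiP_last.mpr (Or.inl rfl)⟩, rfl⟩
    · intro pr hpr pr' hpr' he
      rcases pr with ⟨a, b⟩
      rcases pr' with ⟨a', b'⟩
      simp only [Prod.mk.injEq] at he ⊢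
      exact ⟨Fin.castSucc_injective N he.1, Fin.castSucc_injective N he.2.2.1⟩
    · rintro ⟨a', b', c', d'⟩ hp'
      rw [Finset.mem_filter, mem_crossQ] at hp'
      obtain ⟨⟨h1, h2', h3, h4, h5⟩, hd⟩ := hp'
      simp only at h1 h2' h3 h4 h5 hd
      subst hd
      have hb' : b' = i.castSucc := by
        rcases sameBlock_phiP_last.mp h5 with h | h
        · exact h
        · exfalso
          rw [h] at h2'
          exact absurd (h2'.trans h3) (lt_irrefl _)
      subst hb'
      obtain ⟨c, rfl⟩ := Fin.exists_castSucc_eq.mpr (Fin.ne_of_lt h3)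
      obtain ⟨a, rfl⟩ := Fin.exists_castSucc_eq.mpr
        (Fin.ne_of_lt (h1.trans (Fin.castSucc_lt_last i)))
      refine ⟨(a, c), ?_, rfl⟩
      simp only [Finset.mem_filter, Finset.mem_univ, true_and]
      exact ⟨Fin.castSucc_lt_castSucc_iff.mp h1, Fin.castSucc_lt_castSucc_iff.mp h2',
        (sameBlock_phiP hP hi).mp h4⟩
  have hsplit : cross (phiP i P)
      = ((crossQ (phiP i P)).filter fun p => p.2.2.2 = Fin.last N).card
        + ((crossQ (phiP i P)).filter fun p => ¬ p.2.2.2 = Fin.last N).card := by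
    unfold cross
    rw [Finset.card_filter_add_card_filter_not]
  rw [hsplit, hA, hB]
  omega

/-! ### weight transfer -/

lemma wgt_phiS {N : ℕ} (q t : ℝ) (P : Finset (Finset (Fin N))) :
    wgt q t (phiS P) = wgt q t P := by
  unfold wgt
  rw [s2_phiS, cross_phiS, sd_phiS]

lemma wgt_phiP {N : ℕ} (q t : ℝ) {P : Finset (Finset (Fin N))} {i : Fin N}
    (hP : IsPartition P) (h2 : ∀ B ∈ P, B.card ≤ 2) (hi : ({i} : Finset (Fin N)) ∈ P) :
    wgt q t (phiP i P)
      = t * q ^ ((sings P).filter fun j => i < j).card * wgt q t P := by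
  unfold wgt
  rw [s2_phiP P i hi, cross_phiP hP h2 hi]
  have hexp : cross P + depth P i + sd (phiP i P)
      = (cross P + sd P) + ((sings P).filter fun j => i < j).card := by
    have := sd_phiP P i hi
    omega
  rw [hexp, pow_add, pow_succ]
  ring

/-! ### the insertion recursion (combinatorial core) -/

set_option maxHeartbeats 1000000 in
lemma INS (q t : ℝ) (N c : ℕ) (L L' : List ℕ) (hc : c ≤ N)
    (h1 : ∀ i < N, blockIdx L' i = blockIdx L i)
    (h3 : ∀ i < N, (blockIdx L' i = blockIdx L' N ↔ c ≤ i)) :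
    FF q t (N + 1) L' c = Tq q t (FF q t N L c) := by
  funext a b
  have hTq : Tq q t (FF q t N L c) a b
      = (match b with | 0 => (0 : ℝ) | Nat.succ b' => FF q t N L c a b')
        + t * q ^ b * qInt q (a + 1) * FF q t N L c (a + 1) b := rfl
  rw [hTq]
  -- split the left-hand sum according to whether {last} is a block
  have hsplit : FF q t (N + 1) L' c a b
      = (∑ P' ∈ (Pi2 (N + 1) L').filter
            (fun P' => ({Fin.last N} : Finset (Fin (N + 1))) ∈ P'),
          if ((sings P').filter fun x : Fin (N + 1) => (x : ℕ) < c).card = a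
              ∧ ((sings P').filter fun x : Fin (N + 1) => c ≤ (x : ℕ)).card = b then
            wgt q t P' else 0)
        + ∑ P' ∈ (Pi2 (N + 1) L').filter
            (fun P' => ¬ ({Fin.last N} : Finset (Fin (N + 1))) ∈ P'),
          if ((sings P').filter fun x : Fin (N + 1) => (x : ℕ) < c).card = a
              ∧ ((sings P').filter fun x : Fin (N + 1) => c ≤ (x : ℕ)).card = b then
            wgt q t P' else 0 := by
    unfold FF
    rw [Finset.sum_filter_add_sum_filter_not]
  rw [hsplit]
  congr 1
  -- ============ Branch 1 : last point is a singleton ============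
  · have hB1 : (∑ P' ∈ (Pi2 (N + 1) L').filter
          (fun P' => ({Fin.last N} : Finset (Fin (N + 1))) ∈ P'),
        if ((sings P').filter fun x : Fin (N + 1) => (x : ℕ) < c).card = a
            ∧ ((sings P').filter fun x : Fin (N + 1) => c ≤ (x : ℕ)).card = b then
          wgt q t P' else 0)
        = ∑ P ∈ Pi2 N L,
            if ((sings P).filter fun y : Fin N => (y : ℕ) < c).card = a
                ∧ ((sings P).filter fun y : Fin N => c ≤ (y : ℕ)).card + 1 = b then
              wgt q t P else 0 := by
      symm
      apply Finset.sum_bij (fun P _ => phiS P)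
      · intro P hP
        rw [Finset.mem_filter]
        exact ⟨phiS_mem_Pi2 h1 hP, Finset.mem_insert_self _ _⟩
      · intro P hPm P2 hP2 he
        exact phiS_inj he
      · intro P' hP'
        rw [Finset.mem_filter] at hP'
        obtain ⟨P, hP, rfl⟩ := phiS_surj h1 hP'.1 hP'.2
        exact ⟨P, hP, rfl⟩
      · intro P hP
        have hbelow : ((sings (phiS P)).filter fun x : Fin (N + 1) => (x : ℕ) < c).card
            = ((sings P).filter fun y : Fin N => (y : ℕ) < c).card := by
          rw [sings_phiS, Finset.filter_insert, if_neg (by rw [Fin.val_last]; omega),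
            filter_bup_lt (sings P) c, bup_card]
        have habove : ((sings (phiS P)).filter fun x : Fin (N + 1) => c ≤ (x : ℕ)).card
            = ((sings P).filter fun y : Fin N => c ≤ (y : ℕ)).card + 1 := by
          rw [sings_phiS, Finset.filter_insert, if_pos (by rw [Fin.val_last]; omega),
            Finset.card_insert_of_notMem
              (fun h => last_not_mem_bup _ (Finset.mem_of_mem_filter _ h)),
            filter_bup_ge (sings P) c, bup_card]
        rw [hbelow, habove, wgt_phiS]
    rw [hB1]
    cases b with
    | zero =>
        apply Finset.sum_eq_zero
        intro P _
        rw [if_neg]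
        rintro ⟨-, h⟩
        omega
    | succ b' =>
        show _ = FF q t N L c a b'
        unfold FF
        apply Finset.sum_congr rfl
        intro P _
        apply if_congr _ rfl rfl
        constructor
        · rintro ⟨hu, hv⟩
          exact ⟨hu, by omega⟩
        · rintro ⟨hu, hv⟩
          exact ⟨hu, by omega⟩
  -- ============ Branch 2 : last point is paired ============
  · have hbij : (∑ P' ∈ (Pi2 (N + 1) L').filter
          (fun P' => ¬ ({Fin.last N} : Finset (Fin (N + 1))) ∈ P'),
        if ((sings P').filter fun x : Fin (N + 1) => (x : ℕ) < c).card = a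
            ∧ ((sings P').filter fun x : Fin (N + 1) => c ≤ (x : ℕ)).card = b then
          wgt q t P' else 0)
        = ∑ x ∈ (Pi2 N L).sigma (fun P => (sings P).filter fun y : Fin N => (y : ℕ) < c),
            if ((sings (phiP x.2 x.1)).filter fun z : Fin (N + 1) => (z : ℕ) < c).card = a
                ∧ ((sings (phiP x.2 x.1)).filter fun z : Fin (N + 1) => c ≤ (z : ℕ)).card = b
              then wgt q t (phiP x.2 x.1) else 0 := by
      symm
      apply Finset.sum_bij (fun x _ => phiP x.2 x.1)
      · intro x hx
        rw [Finset.mem_sigma] at hx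
        obtain ⟨hxP, hxi⟩ := hx
        have hxi' := Finset.mem_filter.mp hxi
        have hsing : ({x.2} : Finset (Fin N)) ∈ x.1 := by
          have := hxi'.1
          simpa [sings] using this
        rw [Finset.mem_filter]
        refine ⟨phiP_mem_Pi2 h1 h3 hsing hxi'.2 hxP, ?_⟩
        intro hmem
        rcases Finset.mem_insert.mp hmem with he | he
        · exact (pairBlock_ne_singleton_last x.2) he.symm
        · exact singleton_last_not_mem_pup _ he
      · intro x hx x2 hx2 he
        rw [Finset.mem_sigma] at hx hx2
        have hs1 : ({x.2} : Finset (Fin N)) ∈ x.1 := by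
          have := (Finset.mem_filter.mp hx.2).1
          simpa [sings] using this
        have hs2 : ({x2.2} : Finset (Fin N)) ∈ x2.1 := by
          have := (Finset.mem_filter.mp hx2.2).1
          simpa [sings] using this
        obtain ⟨hii, hPP⟩ := phiP_inj hs1 hs2 he
        rcases x with ⟨P, i⟩
        rcases x2 with ⟨P2, i2⟩
        simp only at hii hPP
        subst hPP
        subst hii
        rfl
      · intro P' hP'
        rw [Finset.mem_filter] at hP'
        obtain ⟨P, i, hP, hiP, hic, rfl⟩ := phiP_surj h1 h3 hP'.1 hP'.2
        refine ⟨⟨P, i⟩, ?_, rfl⟩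
        rw [Finset.mem_sigma]
        refine ⟨hP, Finset.mem_filter.mpr ⟨?_, hic⟩⟩
        simp only [sings, Finset.mem_filter, Finset.mem_univ, true_and]
        exact hiP
      · intro x hx
        rfl
    rw [hbij, Finset.sum_sigma]
    have hper : ∀ P ∈ Pi2 N L,
        (∑ i ∈ (sings P).filter (fun y : Fin N => (y : ℕ) < c),
          if ((sings (phiP i P)).filter fun z : Fin (N + 1) => (z : ℕ) < c).card = a
              ∧ ((sings (phiP i P)).filter fun z : Fin (N + 1) => c ≤ (z : ℕ)).card = b
            then wgt q t (phiP i P) else 0)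
        = (if ((sings P).filter fun y : Fin N => (y : ℕ) < c).card = a + 1
              ∧ ((sings P).filter fun y : Fin N => c ≤ (y : ℕ)).card = b then
            t * q ^ b * qInt q (a + 1) * wgt q t P else 0) := by
      intro P hPm
      obtain ⟨hpart, hinh, h2c⟩ := mem_Pi2.mp hPm
      have hterm : ∀ i ∈ (sings P).filter (fun y : Fin N => (y : ℕ) < c),
          (if ((sings (phiP i P)).filter fun z : Fin (N + 1) => (z : ℕ) < c).card = a
              ∧ ((sings (phiP i P)).filter fun z : Fin (N + 1) => c ≤ (z : ℕ)).card = b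
            then wgt q t (phiP i P) else 0)
          = (if ((sings P).filter fun y : Fin N => (y : ℕ) < c).card = a + 1
                ∧ ((sings P).filter fun y : Fin N => c ≤ (y : ℕ)).card = b then
              t * q ^ ((sings P).filter fun j => i < j).card * wgt q t P else 0) := by
        intro i hi
        have hif := Finset.mem_filter.mp hi
        have hising : i ∈ sings P := hif.1
        have hic : (i : ℕ) < c := hif.2
        have hsing : ({i} : Finset (Fin N)) ∈ P := by
          simpa [sings] using hising
        have hbelow : ((sings (phiP i P)).filter fun z : Fin (N + 1) => (z : ℕ) < c).card + 1
            = ((sings P).filter fun y : Fin N => (y : ℕ) < c).card := by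
          rw [sings_phiP, filter_bup_lt ((sings P).erase i) c, bup_card, Finset.filter_erase,
            Finset.card_erase_of_mem (Finset.mem_filter.mpr ⟨hising, hic⟩)]
          have hpos : 0 < ((sings P).filter fun y : Fin N => (y : ℕ) < c).card :=
            Finset.card_pos.mpr ⟨i, Finset.mem_filter.mpr ⟨hising, hic⟩⟩
          omega
        have habove : ((sings (phiP i P)).filter fun z : Fin (N + 1) => c ≤ (z : ℕ)).card
            = ((sings P).filter fun y : Fin N => c ≤ (y : ℕ)).card := by
          rw [sings_phiP, filter_bup_ge ((sings P).erase i) c, bup_card, Finset.filter_erase,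
            Finset.erase_eq_of_notMem]
          intro hmem
          have := (Finset.mem_filter.mp hmem).2
          omega
        rw [wgt_phiP q t hpart h2c hsing]
        apply if_congr _ rfl rfl
        constructor
        · rintro ⟨hu, hv⟩
          rw [habove] at hv
          exact ⟨by omega, hv⟩
        · rintro ⟨hu, hv⟩
          exact ⟨by omega, by rw [habove]; exact hv⟩
      rw [Finset.sum_congr rfl hterm]
      by_cases hcond : ((sings P).filter fun y : Fin N => (y : ℕ) < c).card = a + 1
          ∧ ((sings P).filter fun y : Fin N => c ≤ (y : ℕ)).card = b
      · rw [if_pos hcond]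
        have hdrop : ∀ i ∈ (sings P).filter (fun y : Fin N => (y : ℕ) < c),
            (if ((sings P).filter fun y : Fin N => (y : ℕ) < c).card = a + 1
                ∧ ((sings P).filter fun y : Fin N => c ≤ (y : ℕ)).card = b then
              t * q ^ ((sings P).filter fun j => i < j).card * wgt q t P else 0)
            = t * q ^ ((sings P).filter fun j => i < j).card * wgt q t P :=
          fun i _ => if_pos hcond
        rw [Finset.sum_congr rfl hdrop]
        have hrs := rank_sum q c (sings P)
        rw [hcond.1, hcond.2] at hrs
        rw [← Finset.sum_mul, ← Finset.mul_sum, hrs]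
        ring
      · rw [if_neg hcond]
        apply Finset.sum_eq_zero
        intro i _
        rw [if_neg hcond]
    rw [Finset.sum_congr rfl hper]
    unfold FF
    rw [Finset.mul_sum]
    apply Finset.sum_congr rfl
    intro P _
    by_cases hcond : ((sings P).filter fun y : Fin N => (y : ℕ) < c).card = a + 1
        ∧ ((sings P).filter fun y : Fin N => c ≤ (y : ℕ)).card = b
    · rw [if_pos hcond, if_pos hcond]
    · rw [if_neg hcond, if_neg hcond, mul_zero]

/-! ### the outer induction -/

lemma outer (q t : ℝ) :
    ∀ (L : List ℕ) (N : ℕ), N = L.sum → ∀ x : ℝ,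
      (∑ σ ∈ Finset.range (N + 1), dsum q t N L σ * qHermite q x t σ)
        = (L.map (qHermite q x t)).prod := by
  intro L
  induction L using List.reverseRecOn with
  | nil =>
      intro N hN x
      simp only [List.sum_nil] at hN
      subst hN
      rw [Finset.sum_range_one]
      unfold dsum
      rw [Pi2_zero, Finset.sum_singleton, sings_empty_part]
      simp [wgt_empty, qHermite]
  | append_singleton ns m ih =>
      intro N hN x
      have hN' : N = ns.sum + m := by
        rw [hN, List.sum_append]; simp
      subst hN'
      -- the chain of tables
      set g : ℕ → ℕ → ℕ → ℝ := fun j => FF q t (ns.sum + j) (ns ++ [j]) ns.sum with hgdef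
      have hg : ∀ j, g (j + 1) = Tq q t (g j) := by
        intro j
        exact INS q t (ns.sum + j) ns.sum (ns ++ [j]) (ns ++ [j + 1]) (by omega)
          (h1_fact ns j) (h3_fact ns j)
      have hg00 : g 0 = FF q t ns.sum (ns ++ [0]) ns.sum := rfl
      have hg0 : g 0 = FF q t ns.sum ns ns.sum := by
        rw [hg00]
        funext a b
        unfold FF
        rw [Pi2_append_zero]
      have h0 : ∀ a b, g 0 a (b + 1) = 0 := by
        intro a b
        rw [hg0]
        exact FF_above q t ns.sum ns a b
      have hsup : ∀ j σ, ns.sum + j < σ → dg (g j) σ = 0 := by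
        intro j σ hσ
        show dg (FF q t (ns.sum + j) (ns ++ [j]) ns.sum) σ = 0
        rw [dg_FF]
        exact dsum_vanish _ _ _ _ hσ
      have hDZ := DZ_iter q t g hg h0
      -- base value
      have base0 : HS q t x (g 0) (ns.sum + 0 + 1) = (ns.map (qHermite q x t)).prod := by
        unfold HS
        rw [← ih ns.sum rfl x]
        apply Finset.sum_congr rfl
        intro σ _
        rw [hg0, dg_FF]
      set S0 := (ns.map (qHermite q x t)).prod with hS0
      -- inner two-step induction
      have inner : ∀ j, HS q t x (g j) (ns.sum + j + 1) = S0 * qHermite q x t j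
          ∧ HS q t x (g (j + 1)) (ns.sum + (j + 1) + 1) = S0 * qHermite q x t (j + 1) := by
        intro j
        induction j with
        | zero =>
            constructor
            · rw [base0]; simp [qHermite]
            · have hdz0 : DZ q (g 0) = fun a b => (0 : ℝ) * g 0 a b := by
                funext a b
                simp [DZ, h0]
              have hsp := spine q t x 0 (g 0) (g 0) (ns.sum + 1) hdz0
                (hsup 0 _ (by omega)) (hsup 0 _ (by omega))
              rw [← hg 0] at hsp
              rw [HS_stable q t x (g 0) (show ns.sum + 0 + 1 ≤ ns.sum + 1 + 1 by omega)
                (fun σ hσ => hsup 0 σ (by omega))] at hsp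
              show HS q t x (g 1) (ns.sum + 1 + 1) = S0 * qHermite q x t 1
              rw [hsp, base0]
              simp [qHermite]
              ring
        | succ j ihj =>
            refine ⟨ihj.2, ?_⟩
            have hsp := spine q t x (qInt q (j + 1)) (g j) (g (j + 1)) (ns.sum + j + 2)
              (hDZ j) (hsup (j + 1) _ (by omega)) (hsup (j + 1) _ (by omega))
            rw [← hg (j + 1)] at hsp
            rw [HS_stable q t x (g (j + 1)) (show ns.sum + (j + 1) + 1 ≤ ns.sum + j + 2 + 1 by omega)
              (fun σ hσ => hsup (j + 1) σ (by omega))] at hsp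
            rw [HS_stable q t x (g j) (show ns.sum + j + 1 ≤ ns.sum + j + 2 + 1 by omega)
              (fun σ hσ => hsup j σ (by omega))] at hsp
            rw [show ns.sum + (j + 1 + 1) + 1 = ns.sum + j + 2 + 1 from by omega]
            rw [show (j + 1 + 1) = (j + 2) from rfl]
            rw [hsp, ihj.1, ihj.2, qHermite_two_step]
            ring
      -- conclude
      have hfin := (inner m).1
      unfold HS at hfin
      have hlhs : (∑ σ ∈ Finset.range (ns.sum + m + 1),
          dsum q t (ns.sum + m) (ns ++ [m]) σ * qHermite q x t σ)
          = ∑ σ ∈ Finset.range (ns.sum + m + 1), dg (g m) σ * qHermite q x t σ := by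
        apply Finset.sum_congr rfl
        intro σ _
        show dsum q t (ns.sum + m) (ns ++ [m]) σ * _ = dg (FF q t (ns.sum + m) (ns ++ [m]) ns.sum) σ * _
        rw [dg_FF]
      rw [hlhs, hfin, List.map_append, List.prod_append]
      simp [hS0]

/-! ### final conversion -/

lemma dsum_zero_eq (q t : ℝ) (ht : 0 ≤ t) (n : ℕ) (L : List ℕ) (hn : n = L.sum) :
    dsum q t n L 0
      = Real.sqrt t ^ n *
          ∑ P ∈ (Finset.univ : Finset (Finset (Finset (Fin n)))).filter
            (fun P => IsPartition P ∧ Inhom L P ∧ ∀ B ∈ P, B.card = 2), q ^ rc P := by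
  rw [Finset.mul_sum]
  unfold dsum
  rw [← Finset.sum_filter]
  have hset : (Pi2 n L).filter (fun P => (sings P).card = 0)
      = (Finset.univ : Finset (Finset (Finset (Fin n)))).filter
          (fun P => IsPartition P ∧ Inhom L P ∧ ∀ B ∈ P, B.card = 2) := by
    ext P
    simp only [Finset.mem_filter, Pi2, Finset.mem_univ, true_and]
    constructor
    · rintro ⟨⟨hP, hI, h2⟩, hs⟩
      refine ⟨hP, hI, ?_⟩
      intro B hB
      have hle := h2 B hB
      have hpos : 0 < B.card := Finset.card_pos.mpr (hP.1 B hB)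
      by_contra hne
      have h1 : B.card = 1 := by omega
      obtain ⟨i, hi⟩ := Finset.card_eq_one.mp h1
      have : i ∈ sings P := by
        simp only [sings, Finset.mem_filter, Finset.mem_univ, true_and]
        exact hi ▸ hB
      rw [Finset.card_eq_zero.mp hs] at this
      exact absurd this (Finset.notMem_empty i)
    · rintro ⟨hP, hI, h2⟩
      refine ⟨⟨hP, hI, fun B hB => le_of_eq (h2 B hB)⟩, ?_⟩
      rw [Finset.card_eq_zero]
      rw [Finset.eq_empty_iff_forall_notMem]
      intro i hi
      simp only [sings, Finset.mem_filter, Finset.mem_univ, true_and] at hi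
      have := h2 _ hi
      simp at this
  rw [hset]
  apply Finset.sum_congr rfl
  intro P hP
  simp only [Finset.mem_filter, Finset.mem_univ, true_and] at hP
  obtain ⟨hpart, hinh, h2⟩ := hP
  have hsings : sings P = ∅ := by
    rw [Finset.eq_empty_iff_forall_notMem]
    intro i hi
    simp only [sings, Finset.mem_filter, Finset.mem_univ, true_and] at hi
    have := h2 _ hi
    simp at this
  have hsd : sd P = 0 := by
    unfold sd
    have : (Finset.univ : Finset (Fin n)).filter (fun i => ({i} : Finset (Fin n)) ∈ P) = ∅ :=
      hsings
    rw [this, Finset.sum_empty]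
  have hcross : cross P = rc P := (rc_eq_cross hpart (fun B hB => le_of_eq (h2 B hB))).symm
  have hs2 : s2count P = P.card := by
    unfold s2count
    rw [Finset.filter_true_of_mem h2]
  -- sum of block sizes is n
  have hcover : Finset.univ = P.biUnion (fun B => B) := by
    ext i
    simp only [Finset.mem_univ, true_iff, Finset.mem_biUnion]
    exact hpart.2.1 i
  have hdisj : ∀ B ∈ P, ∀ C ∈ P, B ≠ C → Disjoint B C := by
    intro B hB C hC hne
    rw [Finset.disjoint_left]
    intro i hiB hiC
    exact hne (hpart.2.2 B hB C hC i hiB hiC)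
  have hsum : 2 * P.card = n := by
    have h1 : (Finset.univ : Finset (Fin n)).card = n := by simp
    rw [hcover, Finset.card_biUnion hdisj] at h1
    have h2' : (∑ B ∈ P, B.card) = ∑ B ∈ P, 2 := by
      apply Finset.sum_congr rfl
      intro B hB
      exact h2 B hB
    rw [h2'] at h1
    simp only [Finset.sum_const, smul_eq_mul] at h1
    omega
  obtain ⟨k, hk⟩ : ∃ k, P.card = k := ⟨_, rfl⟩
  have hpow : t ^ P.card = Real.sqrt t ^ n := by
    rw [hk] at hsum ⊢
    rw [← hsum, pow_mul, Real.sq_sqrt ht]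
  unfold wgt
  rw [hsd, Nat.add_zero, hcross, hs2, hpow]

end QH
/-- The constant coefficient in the expansion of a product of continuous
q-Hermite polynomials in the q-Hermite basis. -/
theorem statement14 (q : ℝ) (hq₁ : -1 < q) (hq₂ : q < 1) (t : ℝ) (ht : 0 ≤ t)
    (ns : List ℕ) (hne : ns ≠ []) (hpos : ∀ m ∈ ns, 0 < m) (c : ℕ → ℝ)
    (hc : ∀ x : ℝ, (ns.map (qHermite q x t)).prod =
      ∑ m ∈ Finset.range (ns.sum + 1), c m * qHermite q x t m) :
    c 0 =
      Real.sqrt t ^ ns.sum *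
        ∑ P ∈ (univ : Finset (Finset (Finset (Fin ns.sum)))).filter
            (fun P => IsPartition P ∧ Inhom ns P ∧ ∀ B ∈ P, B.card = 2),
          q ^ rc P := by
  have houter := QH.outer q t ns ns.sum rfl
  have hzero : ∀ m ≤ ns.sum, c m - QH.dsum q t ns.sum ns m = 0 := by
    apply QH.coeff_unique q t ns.sum (fun m => c m - QH.dsum q t ns.sum ns m)
    intro x
    have hsplit : (∑ m ∈ Finset.range (ns.sum + 1),
        (c m - QH.dsum q t ns.sum ns m) * qHermite q x t m)
        = (∑ m ∈ Finset.range (ns.sum + 1), c m * qHermite q x t m)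
          - ∑ m ∈ Finset.range (ns.sum + 1), QH.dsum q t ns.sum ns m * qHermite q x t m := by
      rw [← Finset.sum_sub_distrib]
      apply Finset.sum_congr rfl
      intros
      ring
    rw [hsplit, ← hc x, houter x, sub_self]
  have h0 := hzero 0 (by omega)
  have hc0 : c 0 = QH.dsum q t ns.sum ns 0 := by linarith
  rw [hc0, QH.dsum_zero_eq q t ht ns.sum ns rfl]
end
end
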